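/- arXiv:1905.00341 — 8 statements merged into one kernel-verified Lean document; each statement's English description precedes it below -/
import Mathlib

section
/- Let w be as in condition (Ker.) with Laplace exponent φ(λ) = ∫₀^∞ (1 − e^{−λs})(−dw(s)), and define H(λ) = φ(λ) − λφ'(λ). Then there exist constants c₁, c₂ > 0 such that for every λ > 0, c₁ λ² ∫₀^{1/λ} s w(s) ds ≤ H(λ) ≤ c₂ λ² ∫₀^{1/λ} s w(s) ds. -/
/-!
Differentiating under the integral sign gives `H(λ) = ∫ (1 - (1 + λs) e^{-λs}) μ(ds)`, while the
layer cake formula, with `μ (s, ∞) = w s`, gives `λ² ∫₀^{1/λ} s w(s) ds = ∫ min(λs, 1)² / 2 μ(ds)`.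
The two integrands are comparable because `1 - (1 + x) e^{-x} = e^{-x} (e^x - 1 - x)` is comparable
to `min(x, 1)²` on `[0, ∞)`.
-/

open MeasureTheory Real Set Filter Topology

namespace Real

lemma one_sub_exp_neg_le_min_one (x : ℝ) : 1 - exp (-x) ≤ min x 1 :=
  le_min (by linarith [add_one_le_exp (-x)]) (by linarith [exp_pos (-x)])

lemma mul_exp_neg_le_min_one {x : ℝ} (hx : 0 ≤ x) : x * exp (-x) ≤ min x 1 :=
  le_min (mul_le_of_le_one_right hx (exp_le_one_iff.2 (by linarith)))
    ((mul_exp_neg_le_exp_neg_one x).trans (exp_le_one_iff.2 (by norm_num)))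

lemma one_sub_exp_neg_sub_mul_exp_neg_le {x : ℝ} (hx : 0 ≤ x) :
    1 - exp (-x) - x * exp (-x) ≤ min x 1 ^ 2 := by
  rcases le_total x 1 with h | h
  · rw [min_eq_left h]
    nlinarith [add_one_le_exp (-x), exp_pos (-x)]
  · rw [min_eq_right h]
    nlinarith [exp_pos (-x)]

lemma min_one_sq_div_le_one_sub_exp_neg_sub_mul_exp_neg {x : ℝ} (hx : 0 ≤ x) :
    min x 1 ^ 2 / (4 * exp 1) ≤ 1 - exp (-x) - x * exp (-x) := by
  have he : exp (-1) * exp 1 = 1 := by rw [← exp_add]; norm_num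
  rw [div_le_iff₀ (by positivity)]
  rcases le_total x 1 with h | h
  · have hquad : x ^ 2 / 2 * exp (-x) ≤ 1 - exp (-x) - x * exp (-x) := by
      have hx' : exp x * exp (-x) = 1 := by rw [← exp_add]; simp
      nlinarith [quadratic_le_exp_of_nonneg hx, exp_pos (-x)]
    have hdecay : exp (-1) ≤ exp (-x) := exp_le_exp.2 (by linarith)
    rw [min_eq_left h]
    nlinarith [mul_le_mul_of_nonneg_left hdecay (sq_nonneg x), exp_pos 1]
  · -- `1 + x ≤ 2 exp ((x - 1) / 2) ≤ 2 exp (x - 1)`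
    have htail : (1 + x) * exp (-x) ≤ 2 * exp (-1) := by
      have hx' : exp (x - 1) * exp (-x) = exp (-1) := by rw [← exp_add]; ring_nf
      nlinarith [add_one_le_exp ((x - 1) / 2), add_one_le_exp (x - 1), exp_pos (-x)]
    rw [min_eq_right h]
    nlinarith [exp_one_gt_d9]

end Real

lemma min_mul_one_le_max_mul_min {c a : ℝ} (ha : 0 ≤ a) :
    min (c * a) 1 ≤ max c 1 * min 1 a := by
  rcases le_total a 1 with h | h
  · rw [min_eq_right h]
    exact (min_le_left _ _).trans (mul_le_mul_of_nonneg_right (le_max_left _ _) ha)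
  · rw [min_eq_left h, mul_one]
    exact (min_le_right _ _).trans (le_max_right _ _)

lemma mul_exp_neg_mul_le {c a : ℝ} (hc : 0 < c) (ha : 0 ≤ a) :
    a * exp (-(c * a)) ≤ c⁻¹ * min (c * a) 1 := by
  rw [le_inv_mul_iff₀ hc, ← mul_assoc]
  exact mul_exp_neg_le_min_one (by positivity)

namespace MeasureTheory

variable {μ : Measure ℝ}

lemma measure_Ioi_eq_ofReal_of_tendsto {w : ℝ → ℝ} {a : ℝ}
    (hμ : ∀ b, a ≤ b → μ (Ioc a b) = ENNReal.ofReal (w a - w b))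
    (hw : Tendsto w atTop (𝓝 0)) : μ (Ioi a) = ENNReal.ofReal (w a) := by
  have hunion : ⋃ b : ℝ, Ioc a b = Ioi a :=
    iUnion_Ioc_eq_Ioi_self_iff.2 fun x _ => ⟨x, le_rfl⟩
  have hlim := tendsto_measure_iUnion_atTop (μ := μ) (s := fun b => Ioc a b)
    fun _ _ hbc => Ioc_subset_Ioc_right hbc
  rw [hunion] at hlim
  refine tendsto_nhds_unique hlim ?_
  have hw' : Tendsto (fun b => ENNReal.ofReal (w a - w b)) atTop (𝓝 (ENNReal.ofReal (w a))) := by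
    simpa using ENNReal.tendsto_ofReal (tendsto_const_nhds (x := w a) |>.sub hw)
  exact hw'.congr' (eventually_ge_atTop a |>.mono fun b hb => (hμ b hb).symm)

lemma lintegral_ofReal_min_sq_div_two (hμ : ∀ᵐ u ∂μ, 0 ≤ u) {b : ℝ} (hb : 0 ≤ b) :
    ∫⁻ u, ENNReal.ofReal (min b u ^ 2 / 2) ∂μ = ∫⁻ s in Ioc 0 b, μ (Ioi s) * ENNReal.ofReal s := by
  have hmin_nonneg : 0 ≤ᵐ[μ] fun u => min b u := hμ.mono fun u hu => le_min hb hu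
  have hlayer := lintegral_comp_eq_lintegral_meas_lt_mul μ hmin_nonneg
    (by fun_prop) (fun t _ => intervalIntegral.intervalIntegrable_id)
    ((ae_restrict_iff' measurableSet_Ioi).2 (Eventually.of_forall fun t ht => le_of_lt ht))
  simp only [integral_id, ne_eq, OfNat.ofNat_ne_zero, not_false_eq_true, zero_pow,
    sub_zero] at hlayer
  rw [hlayer]
  have hlevel (t : ℝ) : μ {u | t < min b u} * ENNReal.ofReal t
      = (Iio b).indicator (fun t => μ (Ioi t) * ENNReal.ofReal t) t := by
    by_cases htb : t < b <;> simp [htb, Ioi]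
  simp_rw [hlevel]
  rw [lintegral_indicator measurableSet_Iio, Measure.restrict_restrict measurableSet_Iio,
    Iio_inter_Ioi]
  exact setLIntegral_congr Ioo_ae_eq_Ioc

lemma integral_Ioc_mul_toReal_measure_Ioi (hμ : ∀ᵐ u ∂μ, 0 ≤ u)
    (hfin : ∀ s, 0 < s → μ (Ioi s) ≠ ⊤) {b : ℝ} (hb : 0 ≤ b) :
    ∫ s in Ioc 0 b, s * (μ (Ioi s)).toReal = ∫ u, min b u ^ 2 / 2 ∂μ := by
  have htail_meas : Measurable fun s : ℝ => (μ (Ioi s)).toReal :=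
    ENNReal.measurable_toReal.comp
      (Antitone.measurable fun _ _ hst => measure_mono (Ioi_subset_Ioi hst))
  rw [integral_eq_lintegral_of_nonneg_ae, integral_eq_lintegral_of_nonneg_ae,
    lintegral_ofReal_min_sq_div_two hμ hb]
  · congr 1
    refine setLIntegral_congr_fun measurableSet_Ioc fun s hs => ?_
    rw [ENNReal.ofReal_mul hs.1.le, ENNReal.ofReal_toReal (hfin s hs.1), mul_comm]
  · exact Eventually.of_forall fun u => by positivity
  · fun_prop
  · exact (ae_restrict_iff' measurableSet_Ioc).2 <| Eventually.of_forall fun s hs => by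
      have := hs.1; positivity
  · exact (measurable_id.mul htail_meas).aestronglyMeasurable

lemma sq_mul_integral_Ioc_inv_mul_toReal_measure_Ioi (hμ : ∀ᵐ u ∂μ, 0 ≤ u)
    (hfin : ∀ s, 0 < s → μ (Ioi s) ≠ ⊤) {l : ℝ} (hl : 0 < l) :
    l ^ 2 * ∫ s in Ioc 0 l⁻¹, s * (μ (Ioi s)).toReal = ∫ u, min (l * u) 1 ^ 2 / 2 ∂μ := by
  rw [integral_Ioc_mul_toReal_measure_Ioi hμ hfin (inv_nonneg.2 hl.le), ← integral_const_mul]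
  congr 1 with u
  rw [← mul_inv_cancel₀ hl.ne', ← mul_min_of_nonneg _ _ hl.le, min_comm]
  ring

lemma integrable_min_mul_one (hμ : ∀ᵐ u ∂μ, 0 ≤ u)
    (hμ_int : ∫⁻ u, ENNReal.ofReal (min 1 u) ∂μ < ⊤) {c : ℝ} (hc : 0 ≤ c) :
    Integrable (fun u => min (c * u) 1) μ := by
  have hmin : Integrable (fun u => min 1 u) μ :=
    ⟨by fun_prop,
      (hasFiniteIntegral_iff_ofReal (hμ.mono fun u hu => le_min zero_le_one hu)).2 hμ_int⟩
  refine (hmin.const_mul (max c 1)).mono' (by fun_prop) (hμ.mono fun u hu => ?_)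
  rw [Real.norm_of_nonneg (le_min (by positivity) zero_le_one)]
  exact min_mul_one_le_max_mul_min hu

lemma integrable_one_sub_exp_neg_mul (hμ : ∀ᵐ u ∂μ, 0 ≤ u)
    (hμ_int : ∫⁻ u, ENNReal.ofReal (min 1 u) ∂μ < ⊤) {c : ℝ} (hc : 0 ≤ c) :
    Integrable (fun a => 1 - exp (-c * a)) μ := by
  refine (integrable_min_mul_one hμ hμ_int hc).mono' (by fun_prop) (hμ.mono fun a ha => ?_)
  rw [neg_mul, Real.norm_of_nonneg (by simp; positivity)]
  exact one_sub_exp_neg_le_min_one _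

lemma integrable_mul_exp_neg_mul (hμ : ∀ᵐ u ∂μ, 0 ≤ u)
    (hμ_int : ∫⁻ u, ENNReal.ofReal (min 1 u) ∂μ < ⊤) {c : ℝ} (hc : 0 < c) :
    Integrable (fun a => a * exp (-c * a)) μ := by
  refine ((integrable_min_mul_one hμ hμ_int hc.le).const_mul c⁻¹).mono' (by fun_prop)
    (hμ.mono fun a ha => ?_)
  rw [neg_mul, Real.norm_of_nonneg (by positivity)]
  exact mul_exp_neg_mul_le hc ha

lemma hasDerivAt_integral_one_sub_exp_neg_mul (hμ : ∀ᵐ u ∂μ, 0 ≤ u)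
    (hμ_int : ∫⁻ u, ENNReal.ofReal (min 1 u) ∂μ < ⊤) {l : ℝ} (hl : 0 < l) :
    HasDerivAt (fun x => ∫ a, (1 - exp (-x * a)) ∂μ) (∫ a, a * exp (-l * a) ∂μ) l := by
  have hl2 : 0 < l / 2 := half_pos hl
  -- on `ball l (l / 2)` the derivative `a * exp (-x * a)` is dominated by its value at `l / 2`
  refine (hasDerivAt_integral_of_dominated_loc_of_deriv_le (F := fun x a => 1 - exp (-x * a))
    (F' := fun x a => a * exp (-x * a)) (Metric.ball_mem_nhds l hl2)
    (Eventually.of_forall fun x => by fun_prop) (integrable_one_sub_exp_neg_mul hμ hμ_int hl.le)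
    (by fun_prop) ?_ ((integrable_min_mul_one hμ hμ_int hl2.le).const_mul (l / 2)⁻¹) ?_).2
  · refine hμ.mono fun a ha x hx => ?_
    have hxl : l / 2 ≤ x := by
      rw [Metric.mem_ball, Real.dist_eq, abs_lt] at hx
      linarith
    rw [Real.norm_of_nonneg (by positivity)]
    calc a * exp (-x * a) ≤ a * exp (-(l / 2 * a)) := by gcongr; nlinarith
      _ ≤ (l / 2)⁻¹ * min (l / 2 * a) 1 := mul_exp_neg_mul_le hl2 ha
  · refine Eventually.of_forall fun a x _ => ?_
    have hlin : HasDerivAt (fun x => -x * a) (-a) x := by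
      simpa using (hasDerivAt_neg x).mul_const a
    convert hlin.exp.const_sub 1 using 1
    ring

lemma integral_one_sub_exp_neg_mul_sub_mul_deriv (hμ : ∀ᵐ u ∂μ, 0 ≤ u)
    (hμ_int : ∫⁻ u, ENNReal.ofReal (min 1 u) ∂μ < ⊤) {l : ℝ} (hl : 0 < l) :
    (∫ a, (1 - exp (-l * a)) ∂μ) - l * deriv (fun x => ∫ a, (1 - exp (-x * a)) ∂μ) l
      = ∫ a, (1 - exp (-l * a) - l * (a * exp (-l * a))) ∂μ := by
  rw [(hasDerivAt_integral_one_sub_exp_neg_mul hμ hμ_int hl).deriv, ← integral_const_mul,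
    integral_sub (integrable_one_sub_exp_neg_mul hμ hμ_int hl.le)
      ((integrable_mul_exp_neg_mul hμ hμ_int hl).const_mul l)]

lemma integral_one_sub_exp_neg_mul_sub_mul_bounds (hμ : ∀ᵐ u ∂μ, 0 ≤ u)
    (hμ_int : ∫⁻ u, ENNReal.ofReal (min 1 u) ∂μ < ⊤) {l : ℝ} (hl : 0 < l) :
    (2 * exp 1)⁻¹ * ∫ u, min (l * u) 1 ^ 2 / 2 ∂μ
        ≤ ∫ a, (1 - exp (-l * a) - l * (a * exp (-l * a))) ∂μ ∧
      ∫ a, (1 - exp (-l * a) - l * (a * exp (-l * a))) ∂μ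
        ≤ 2 * ∫ u, min (l * u) 1 ^ 2 / 2 ∂μ := by
  have hK : Integrable (fun u => min (l * u) 1 ^ 2 / 2) μ :=
    (integrable_min_mul_one hμ hμ_int hl.le).mono' (by fun_prop) <| hμ.mono fun u hu => by
      have : 0 ≤ min (l * u) 1 := le_min (by positivity) zero_le_one
      rw [Real.norm_of_nonneg (by positivity)]
      nlinarith [min_le_right (l * u) 1]
  have hG : Integrable (fun a => 1 - exp (-l * a) - l * (a * exp (-l * a))) μ :=
    (integrable_one_sub_exp_neg_mul hμ hμ_int hl.le).sub
      ((integrable_mul_exp_neg_mul hμ hμ_int hl).const_mul l)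
  rw [← integral_const_mul, ← integral_const_mul]
  simp only [neg_mul, ← mul_assoc] at hG ⊢
  constructor
  · refine integral_mono_ae (hK.const_mul _) hG <| hμ.mono fun a ha => ?_
    calc (2 * exp 1)⁻¹ * (min (l * a) 1 ^ 2 / 2) = min (l * a) 1 ^ 2 / (4 * exp 1) := by ring
      _ ≤ _ := min_one_sq_div_le_one_sub_exp_neg_sub_mul_exp_neg (mul_nonneg hl.le ha)
  · refine integral_mono_ae hG (hK.const_mul _) <| hμ.mono fun a ha => ?_
    linarith [one_sub_exp_neg_sub_mul_exp_neg_le (mul_nonneg hl.le ha)]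

end MeasureTheory

theorem H_comparable_to_weighted_tail_integral_general
    (w φ H : ℝ → ℝ) (μ : Measure ℝ)
    (hw_nonneg : ∀ s, 0 < s → 0 ≤ w s)
    (hw_infty : Tendsto w atTop (nhds 0))
    (hμ_supp : μ (Iic 0) = 0)
    (hμ_tail : ∀ a b, 0 < a → a ≤ b → μ (Ioc a b) = ENNReal.ofReal (w a - w b))
    (hμ_int : ∫⁻ s, ENNReal.ofReal (min 1 s) ∂μ < ⊤)
    (hφ : ∀ l, 0 ≤ l → φ l = ∫ s, (1 - Real.exp (-l * s)) ∂μ)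
    (hH : ∀ l, 0 < l → H l = φ l - l * deriv φ l) :
    ∃ c₁ c₂ : ℝ, 0 < c₁ ∧ 0 < c₂ ∧ ∀ l, 0 < l →
      c₁ * (l ^ 2 * ∫ s in Ioc (0:ℝ) l⁻¹, s * w s) ≤ H l ∧
      H l ≤ c₂ * (l ^ 2 * ∫ s in Ioc (0:ℝ) l⁻¹, s * w s) := by
  have hpos : ∀ᵐ u ∂μ, 0 ≤ u :=
    measure_mono_null (fun u (hu : ¬0 ≤ u) => (not_le.1 hu).le) hμ_supp
  have htail (s : ℝ) (hs : 0 < s) : μ (Ioi s) = ENNReal.ofReal (w s) :=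
    measure_Ioi_eq_ofReal_of_tendsto (hμ_tail s · hs) hw_infty
  have hH_eq (l : ℝ) (hl : 0 < l) :
      H l = ∫ a, (1 - exp (-l * a) - l * (a * exp (-l * a))) ∂μ := by
    have hφ_eq : φ =ᶠ[𝓝 l] fun x => ∫ a, (1 - exp (-x * a)) ∂μ :=
      eventually_gt_nhds hl |>.mono fun x hx => hφ x hx.le
    rw [hH l hl, hφ_eq.deriv_eq, hφ l hl.le,
      integral_one_sub_exp_neg_mul_sub_mul_deriv hpos hμ_int hl]
  have hW_eq (l : ℝ) (hl : 0 < l) :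
      l ^ 2 * ∫ s in Ioc (0:ℝ) l⁻¹, s * w s = ∫ u, min (l * u) 1 ^ 2 / 2 ∂μ := by
    have hw_eq : EqOn (fun s => s * w s) (fun s => s * (μ (Ioi s)).toReal) (Ioc 0 l⁻¹) :=
      fun s hs => by simp only [htail s hs.1, ENNReal.toReal_ofReal (hw_nonneg s hs.1)]
    rw [setIntegral_congr_fun measurableSet_Ioc hw_eq,
      sq_mul_integral_Ioc_inv_mul_toReal_measure_Ioi hpos
        (fun s hs => htail s hs ▸ ENNReal.ofReal_ne_top) hl]
  refine ⟨(2 * exp 1)⁻¹, 2, by positivity, two_pos, fun l hl => ?_⟩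
  rw [hH_eq l hl, hW_eq l hl]
  exact integral_one_sub_exp_neg_mul_sub_mul_bounds hpos hμ_int hl

/-- Under condition (Ker.), `H(λ) = φ(λ) - λ φ'(λ)` is comparable to
`λ² ∫₀^{1/λ} s w(s) ds`. -/
theorem H_comparable_to_weighted_tail_integral
    (w φ H : ℝ → ℝ) (μ : Measure ℝ)
    (hw_nonneg : ∀ s, 0 < s → 0 ≤ w s)
    (hw_anti : ∀ s t, 0 < s → s ≤ t → w t ≤ w s)
    (hw_rc : ∀ s, 0 < s → Tendsto w (nhdsWithin s (Ioi s)) (nhds (w s)))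
    (hw_zero : Tendsto w (nhdsWithin 0 (Ioi 0)) atTop)
    (hw_infty : Tendsto w atTop (nhds 0))
    (hμ_supp : μ (Iic 0) = 0)
    (hμ_tail : ∀ a b, 0 < a → a ≤ b → μ (Ioc a b) = ENNReal.ofReal (w a - w b))
    (hμ_int : ∫⁻ s, ENNReal.ofReal (min 1 s) ∂μ < ⊤)
    (hφ : ∀ l, 0 ≤ l → φ l = ∫ s, (1 - Real.exp (-l * s)) ∂μ)
    (hH : ∀ l, 0 < l → H l = φ l - l * deriv φ l) :
    ∃ c₁ c₂ : ℝ, 0 < c₁ ∧ 0 < c₂ ∧ ∀ l, 0 < l →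
      c₁ * (l ^ 2 * ∫ s in Ioc (0:ℝ) l⁻¹, s * w s) ≤ H l ∧
      H l ≤ c₂ * (l ^ 2 * ∫ s in Ioc (0:ℝ) l⁻¹, s * w s) :=
  H_comparable_to_weighted_tail_integral_general w φ H μ hw_nonneg hw_infty hμ_supp hμ_tail hμ_int
    hφ hH
end

section
/- Let w satisfy condition (Ker.) and suppose there exist δ ≥ 2 and t₀ > 0 and c₀ > 0 such that w(R)/w(r) ≥ c₀ (R/r)^{−δ} for all 0 < r ≤ R ≤ t₀. Then there is a constant c₁ > 0 such that for every t ∈ (0, t₀], H(t^{−1})^{δ+1} ≤ c₁ φ(t^{−1})^δ w(t), where φ is the Laplace exponent of w and H(λ) = φ(λ) − λφ'(λ). -/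
open MeasureTheory Real Set Filter
open scoped ENNReal NNReal


-- elementary inequalities
lemma exp_ineq1 {x : ℝ} (hx : 0 ≤ x) : (1/2) * min x 1 ≤ 1 - Real.exp (-x) := by
  rcases le_total x 1 with h | h
  · rw [min_eq_left h]
    have h1 : Real.exp (-x) ≤ 1 / (1 + x) := by
      rw [Real.exp_neg]
      rw [one_div, inv_le_inv₀ (Real.exp_pos x) (by linarith)]
      linarith [Real.add_one_le_exp x]
    have h2 : 1 - 1/(1+x) = x/(1+x) := by field_simp; ring
    have h3 : x/(1+x) ≥ x/2 := by
      apply div_le_div_of_nonneg_left hx (by linarith) (by linarith) |>.trans_eq rfl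
    nlinarith [Real.exp_pos x]
  · rw [min_eq_right h]
    have : Real.exp (-x) ≤ Real.exp (-1) := Real.exp_le_exp.mpr (by linarith)
    have h2 : Real.exp (-1) ≤ 1/2 := by
      rw [Real.exp_neg]
      rw [Real.exp_neg] at this
      have := Real.add_one_le_exp 1
      rw [inv_le_comm₀ (Real.exp_pos 1) (by norm_num)]
      · norm_num; linarith
    linarith

lemma exp_ineq2_nonneg {x : ℝ} (hx : 0 ≤ x) : 0 ≤ 1 - (1+x) * Real.exp (-x) := by
  have h := Real.add_one_le_exp x
  have hp := Real.exp_pos x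
  rw [Real.exp_neg]
  have : (1+x) * (Real.exp x)⁻¹ ≤ 1 := by
    rw [mul_inv_le_iff₀' hp]; nlinarith
  linarith

lemma exp_ineq2 {x : ℝ} (hx : 0 ≤ x) : 1 - (1+x) * Real.exp (-x) ≤ (min x 1)^2 := by
  rcases le_total x 1 with h | h
  · rw [min_eq_left h]
    have h1 : 1 - x ≤ Real.exp (-x) := by linarith [Real.add_one_le_exp (-x)]
    nlinarith [Real.exp_pos (-x)]
  · rw [min_eq_right h]
    have := exp_ineq2_nonneg hx
    nlinarith [mul_nonneg (by linarith : (0:ℝ) ≤ 1 + x) (Real.exp_pos (-x)).le]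

lemma tail_measure (w : ℝ → ℝ) (μ : Measure ℝ)
    (hw_infty : Tendsto w atTop (nhds 0))
    (hμ_tail : ∀ a b, 0 < a → a ≤ b → μ (Ioc a b) = ENNReal.ofReal (w a - w b))
    {a : ℝ} (ha : 0 < a) : μ (Ioi a) = ENNReal.ofReal (w a) := by
  have hU : Ioi a = ⋃ n : ℕ, Ioc a (a + n) := by
    ext x
    simp only [mem_Ioi, mem_iUnion, mem_Ioc]
    constructor
    · intro hx
      obtain ⟨n, hn⟩ := exists_nat_ge (x - a)
      exact ⟨n, hx, by linarith⟩
    · rintro ⟨n, h1, _⟩; exact h1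
  have hmono : Monotone (fun n : ℕ => Ioc a (a + n)) := by
    intro m n hmn
    apply Ioc_subset_Ioc le_rfl
    have : (m:ℝ) ≤ n := Nat.cast_le.mpr hmn
    linarith
  have h1 : Tendsto (fun n : ℕ => μ (Ioc a (a + n))) atTop (nhds (μ (Ioi a))) := by
    rw [hU]
    exact tendsto_measure_iUnion_atTop hmono
  have h2 : Tendsto (fun n : ℕ => μ (Ioc a (a + n))) atTop (nhds (ENNReal.ofReal (w a))) := by
    have heq : ∀ n : ℕ, μ (Ioc a (a + n)) = ENNReal.ofReal (w a - w (a + n)) := fun n =>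
      hμ_tail a (a + n) ha (le_add_of_nonneg_right n.cast_nonneg)
    simp_rw [heq]
    have h3 : Tendsto (fun n : ℕ => w (a + n)) atTop (nhds 0) := by
      apply hw_infty.comp
      apply tendsto_atTop_add_const_left
      exact tendsto_natCast_atTop_atTop
    have h4 : Tendsto (fun n : ℕ => w a - w (a + n)) atTop (nhds (w a)) := by
      simpa using tendsto_const_nhds.sub h3
    exact (ENNReal.continuous_ofReal.tendsto _).comp h4
  exact tendsto_nhds_unique h1 h2

lemma w_pos (w : ℝ → ℝ) (δ t₀ c₀ : ℝ) (hc₀ : 0 < c₀)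
    (hw_nonneg : ∀ s, 0 < s → 0 ≤ w s)
    (hscale : ∀ r R, 0 < r → r ≤ R → R ≤ t₀ → c₀ * (R / r) ^ (-δ) ≤ w R / w r)
    {s : ℝ} (hs : 0 < s) (hst : s ≤ t₀) : 0 < w s := by
  rcases (hw_nonneg s hs).lt_or_eq with h | h
  · exact h
  have hle := hscale s s hs le_rfl hst
  rw [← h, zero_div] at hle
  have hpos : (0:ℝ) < c₀ * (s/s) ^ (-δ) := by
    apply mul_pos hc₀
    apply Real.rpow_pos_of_pos
    rw [div_self hs.ne']; norm_num
  linarith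

lemma w_scale_ub (w : ℝ → ℝ) (δ t₀ c₀ : ℝ) (hc₀ : 0 < c₀)
    (hw_nonneg : ∀ s, 0 < s → 0 ≤ w s)
    (hscale : ∀ r R, 0 < r → r ≤ R → R ≤ t₀ → c₀ * (R / r) ^ (-δ) ≤ w R / w r)
    {r R : ℝ} (hr : 0 < r) (hrR : r ≤ R) (hRt : R ≤ t₀) :
    w r ≤ c₀⁻¹ * (R / r) ^ δ * w R := by
  have hwr : 0 < w r := w_pos w δ t₀ c₀ hc₀ hw_nonneg hscale hr (hrR.trans hRt)
  have hle := hscale r R hr hrR hRt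
  have hq : (0:ℝ) < R / r := div_pos (hr.trans_le hrR) hr
  have hrp : (0:ℝ) < (R / r) ^ δ := Real.rpow_pos_of_pos hq δ
  rw [Real.rpow_neg hq.le] at hle
  rw [le_div_iff₀ hwr] at hle
  have key : (R/r) ^ δ * c₀⁻¹ * (c₀ * ((R/r) ^ δ)⁻¹ * w r) = w r := by
    field_simp
  calc w r = (R/r) ^ δ * c₀⁻¹ * (c₀ * ((R/r) ^ δ)⁻¹ * w r) := key.symm
    _ ≤ (R/r) ^ δ * c₀⁻¹ * w R := by
        apply mul_le_mul_of_nonneg_left hle (by positivity)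
    _ = c₀⁻¹ * (R/r) ^ δ * w R := by ring

lemma ae_pos (μ : Measure ℝ) (hμ_supp : μ (Iic 0) = 0) : ∀ᵐ u ∂μ, 0 < u := by
  rw [ae_iff]
  convert hμ_supp using 2
  ext x; simp [not_lt]

lemma integrable_of_min_bound (μ : Measure ℝ) (hμ_supp : μ (Iic 0) = 0)
    (hμ_int : ∫⁻ s, ENNReal.ofReal (min 1 s) ∂μ < ⊤)
    (f : ℝ → ℝ) (hf : AEStronglyMeasurable f μ) {C : ℝ} (hC : 0 ≤ C)
    (hbound : ∀ s, 0 < s → |f s| ≤ C * min 1 s) : Integrable f μ := by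
  refine ⟨hf, ?_⟩
  rw [hasFiniteIntegral_iff_norm]
  calc ∫⁻ a, ENNReal.ofReal ‖f a‖ ∂μ
      ≤ ∫⁻ a, ENNReal.ofReal C * ENNReal.ofReal (min 1 a) ∂μ := by
        apply lintegral_mono_ae
        filter_upwards [ae_pos μ hμ_supp] with a ha
        rw [← ENNReal.ofReal_mul hC]
        exact ENNReal.ofReal_le_ofReal ((Real.norm_eq_abs _) ▸ hbound a ha)
    _ = ENNReal.ofReal C * ∫⁻ a, ENNReal.ofReal (min 1 a) ∂μ :=
        lintegral_const_mul' _ _ ENNReal.ofReal_ne_top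
    _ < ⊤ := ENNReal.mul_lt_top ENNReal.ofReal_lt_top hμ_int

lemma one_sub_exp_abs_bound {l s : ℝ} (hl : 0 < l) (hs : 0 < s) :
    |1 - Real.exp (-l * s)| ≤ max 1 l * min 1 s := by
  have hls : 0 < l * s := mul_pos hl hs
  have he1 : Real.exp (-l * s) ≤ 1 := by
    rw [Real.exp_le_one_iff]; nlinarith
  have he0 : 0 < Real.exp (-l * s) := Real.exp_pos _
  rw [abs_of_nonneg (by linarith)]
  have hub : 1 - Real.exp (-l * s) ≤ l * s := by
    have := Real.add_one_le_exp (-(l*s))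
    have : 1 - l * s ≤ Real.exp (-l*s) := by rw [neg_mul]; linarith
    linarith
  rcases le_total s 1 with h | h
  · rw [min_eq_right h]
    calc 1 - Real.exp (-l*s) ≤ l * s := hub
      _ ≤ max 1 l * s := by apply mul_le_mul_of_nonneg_right (le_max_right 1 l) hs.le
  · rw [min_eq_left h]
    calc 1 - Real.exp (-l*s) ≤ 1 := by linarith
      _ ≤ max 1 l * 1 := by rw [mul_one]; exact le_max_left 1 l

lemma integrable_one_sub_exp (μ : Measure ℝ) (hμ_supp : μ (Iic 0) = 0)
    (hμ_int : ∫⁻ s, ENNReal.ofReal (min 1 s) ∂μ < ⊤) {l : ℝ} (hl : 0 < l) :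
    Integrable (fun s => 1 - Real.exp (-l * s)) μ := by
  apply integrable_of_min_bound μ hμ_supp hμ_int _ ?_
      (le_trans zero_le_one (le_max_left 1 l)) (fun s hs => one_sub_exp_abs_bound hl hs)
  apply Continuous.aestronglyMeasurable
  continuity

lemma hasDerivAt_phi_int (μ : Measure ℝ) (hμ_supp : μ (Iic 0) = 0)
    (hμ_int : ∫⁻ s, ENNReal.ofReal (min 1 s) ∂μ < ⊤) {l : ℝ} (hl : 0 < l) :
    Integrable (fun s => s * Real.exp (-l * s)) μ ∧
    HasDerivAt (fun x => ∫ s, (1 - Real.exp (-x * s)) ∂μ)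
      (∫ s, s * Real.exp (-l * s) ∂μ) l := by
  have key := hasDerivAt_integral_of_dominated_loc_of_deriv_le (μ := μ)
    (F := fun x s => 1 - Real.exp (-x * s)) (F' := fun x s => s * Real.exp (-x * s))
    (x₀ := l) (s := Metric.ball l (l/2)) (bound := fun s => (1 + 2/l) * min 1 s) (Metric.ball_mem_nhds l (by positivity))
    ?_ ?_ ?_ ?_ ?_ ?_
  · exact key
  · filter_upwards with x
    apply Continuous.aestronglyMeasurable; continuity
  · exact integrable_one_sub_exp μ hμ_supp hμ_int hl
  · apply Continuous.aestronglyMeasurable; continuity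
  · -- bound
    filter_upwards [ae_pos μ hμ_supp] with s hs
    intro x hx
    rw [Metric.mem_ball, Real.dist_eq] at hx
    have hx2 : l/2 < x := by cases' abs_lt.mp hx with h1 h2; linarith
    have hmono : Real.exp (-x * s) ≤ Real.exp (-(l/2) * s) := by
      apply Real.exp_le_exp.mpr; nlinarith
    have hnn : 0 ≤ s * Real.exp (-x*s) := by positivity
    rw [Real.norm_eq_abs, abs_of_nonneg hnn]
    rcases le_total s 1 with h | h
    · rw [min_eq_right h]
      have hle1 : Real.exp (-x*s) ≤ 1 := by
        rw [Real.exp_le_one_iff]; nlinarith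
      have h2l : (0:ℝ) ≤ 2/l := by positivity
      nlinarith [mul_le_mul_of_nonneg_left hle1 hs.le]
    · rw [min_eq_left h]
      have hkey : s * Real.exp (-(l/2) * s) ≤ 2/l := by
        have h1 : (l/2) * s ≤ Real.exp ((l/2)*s) := by
          linarith [Real.add_one_le_exp ((l/2)*s), Real.exp_pos ((l/2)*s)]
        have h2 : Real.exp (-(l/2)*s) = (Real.exp ((l/2)*s))⁻¹ := by
          rw [← Real.exp_neg]; ring_nf
        rw [h2]
        rw [mul_inv_le_iff₀ (Real.exp_pos _)]
        calc s = (2/l) * ((l/2) * s) := by field_simp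
          _ ≤ (2/l) * Real.exp ((l/2)*s) := by
              apply mul_le_mul_of_nonneg_left h1 (by positivity)
      calc s * Real.exp (-x*s) ≤ s * Real.exp (-(l/2)*s) := by
            apply mul_le_mul_of_nonneg_left hmono (by linarith)
        _ ≤ 2/l := hkey
        _ ≤ (1 + 2/l) * 1 := by rw [mul_one]; linarith
  · -- bound integrable
    apply integrable_of_min_bound μ hμ_supp hμ_int _ ?_ (C := 1 + 2/l) (by positivity) ?_
    · exact (continuous_const.mul (continuous_const.min continuous_id)).aestronglyMeasurable
    · intro s hs
      rw [abs_of_nonneg (mul_nonneg (by positivity) (le_min zero_le_one hs.le))]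
  · -- differentiability
    filter_upwards with s
    intro x hx
    have h1 : HasDerivAt (fun x : ℝ => -x * s) (-s) x := by
      simpa using ((hasDerivAt_id x).neg.mul_const s)
    have h2 := h1.exp
    have h3 := (hasDerivAt_const x (1:ℝ)).sub h2
    convert h3 using 1
    · rfl
    · ring

-- the dyadic covering
lemma dyadic_cover {t : ℝ} (ht : 0 < t) :
    Ioc 0 t = ⋃ n : ℕ, Ioc (t/2^(n+1)) (t/2^n) := by
  ext x
  simp only [mem_Ioc, mem_iUnion]
  constructor
  · rintro ⟨hx0, hxt⟩
    have hex : ∃ n : ℕ, t/2^(n+1) < x := by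
      obtain ⟨n, hn⟩ := pow_unbounded_of_one_lt (t/x) (one_lt_two (α := ℝ))
      refine ⟨n, ?_⟩
      rw [div_lt_iff₀ (by positivity)]
      rw [div_lt_iff₀ hx0] at hn
      have h2 : (2:ℝ)^n ≤ 2^(n+1) := pow_le_pow_right₀ one_le_two (Nat.le_succ n)
      nlinarith
    refine ⟨Nat.find hex, Nat.find_spec hex, ?_⟩
    rcases Nat.eq_zero_or_pos (Nat.find hex) with h0 | hpos
    · rw [h0]; simpa using hxt
    · obtain ⟨m, hm⟩ := Nat.exists_eq_succ_of_ne_zero hpos.ne'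
      rw [hm]
      have := Nat.find_min hex (m := m) (by omega)
      push_neg at this
      simpa [pow_succ] using this
  · rintro ⟨n, h1, h2⟩
    refine ⟨lt_of_le_of_lt (by positivity) h1, h2.trans ?_⟩
    rw [div_le_iff₀ (by positivity)]
    nlinarith [(one_le_pow₀ (one_le_two (α := ℝ)) : (1:ℝ) ≤ 2^n)]

lemma term_arith (δ : ℝ) (c₀ t W : ℝ) (ht : 0 < t) (n : ℕ) :
    (t/2^n) ^ (δ+2) * (c₀⁻¹ * ((2:ℝ)^(n+1)) ^ δ * W)
      = (c₀⁻¹ * 2 ^ δ * (t ^ (δ+2) * W)) * (1/4:ℝ)^n := by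
  have h2 : (0:ℝ) < 2 := two_pos
  have hpn : (0:ℝ) < 2^n := by positivity
  have e1 : ((2:ℝ)^(n+1)) ^ δ = 2 ^ (((n:ℝ)+1)*δ) := by
    rw [← Real.rpow_natCast 2 (n+1), ← Real.rpow_mul h2.le]
    push_cast; ring_nf
  have e2 : ((2:ℝ)^n : ℝ) ^ (δ+2) = 2 ^ ((n:ℝ)*(δ+2)) := by
    rw [← Real.rpow_natCast 2 n, ← Real.rpow_mul h2.le]
  have h24 : (2:ℝ) ^ (-2:ℝ) = 1/4 := by
    rw [Real.rpow_neg h2.le, show (2:ℝ)^(2:ℝ) = 4 by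
      rw [show (2:ℝ)^(2:ℝ) = 2^(2:ℕ) from Real.rpow_natCast 2 2]; norm_num]
    norm_num
  have e3 : ((1/4:ℝ))^n = 2 ^ ((-2:ℝ)*(n:ℝ)) := by
    calc ((1/4:ℝ))^n = ((2:ℝ)^(-2:ℝ))^n := by rw [h24]
      _ = ((2:ℝ)^(-2:ℝ))^((n:ℕ):ℝ) := (Real.rpow_natCast _ n).symm
      _ = 2^((-2:ℝ)*(n:ℝ)) := by rw [← Real.rpow_mul h2.le]
  have e4 : (t/2^n) ^ (δ+2) = t ^ (δ+2) / 2 ^ ((n:ℝ)*(δ+2)) := by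
    rw [Real.div_rpow ht.le hpn.le, e2]
  have key2 : (2:ℝ) ^ (((n:ℝ)+1)*δ) = 2 ^ ((n:ℝ)*(δ+2)) * (2 ^ δ * 2 ^ ((-2:ℝ)*(n:ℝ))) := by
    rw [← Real.rpow_add h2, ← Real.rpow_add h2]
    congr 1
    ring
  have hne : (2:ℝ) ^ ((n:ℝ)*(δ+2)) ≠ 0 := (Real.rpow_pos_of_pos h2 _).ne'
  rw [e1, e3, e4, div_mul_eq_mul_div, div_eq_iff hne, key2]
  ring

lemma M_bound (w : ℝ → ℝ) (μ : Measure ℝ) (δ t₀ c₀ : ℝ) (hδ : 2 ≤ δ) (hc₀ : 0 < c₀)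
    (hw_nonneg : ∀ s, 0 < s → 0 ≤ w s)
    (hw_infty : Tendsto w atTop (nhds 0))
    (hμ_supp : μ (Iic 0) = 0)
    (hμ_tail : ∀ a b, 0 < a → a ≤ b → μ (Ioc a b) = ENNReal.ofReal (w a - w b))
    (hscale : ∀ r R, 0 < r → r ≤ R → R ≤ t₀ → c₀ * (R / r) ^ (-δ) ≤ w R / w r)
    {t : ℝ} (ht : 0 < t) (htt : t ≤ t₀) :
    ∫⁻ u, (ENNReal.ofReal (min t u)) ^ (δ+2) ∂μ
      ≤ ENNReal.ofReal ((1 + c₀⁻¹ * 2 ^ δ * (4/3)) * (t ^ (δ+2) * w t)) := by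
  have hwt : 0 ≤ w t := hw_nonneg t ht
  have htp : (0:ℝ) < t ^ (δ+2) := Real.rpow_pos_of_pos ht _
  -- restrict to Ioi 0
  have hres : μ.restrict (Ioi 0) = μ :=
    Measure.restrict_eq_self_of_ae_mem (by filter_upwards [ae_pos μ hμ_supp] with u hu using hu)
  have hsplit : (Ioi (0:ℝ)) = Ioc 0 t ∪ Ioi t := (Ioc_union_Ioi_eq_Ioi ht.le).symm
  have hmeas : Measurable fun u => (ENNReal.ofReal (min t u)) ^ (δ+2) :=
    ((measurable_const.min measurable_id).ennreal_ofReal).pow_const _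
  have hdisj : Disjoint (Ioc (0:ℝ) t) (Ioi t) := by
    rw [Set.disjoint_left]
    rintro x ⟨_, hx2⟩ hx3
    exact absurd hx3 (not_lt.mpr hx2)
  have hrestr : ∫⁻ u in Ioi (0:ℝ), (ENNReal.ofReal (min t u)) ^ (δ+2) ∂μ
      = ∫⁻ u, (ENNReal.ofReal (min t u)) ^ (δ+2) ∂μ := by rw [hres]
  have htail : ∫⁻ u in Ioi t, (ENNReal.ofReal (min t u)) ^ (δ+2) ∂μ
      = ENNReal.ofReal (t ^ (δ+2) * w t) := by
    have hcg : ∫⁻ u in Ioi t, (ENNReal.ofReal (min t u)) ^ (δ+2) ∂μ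
        = ∫⁻ _ in Ioi t, ENNReal.ofReal (t ^ (δ+2)) ∂μ := by
      apply setLIntegral_congr_fun measurableSet_Ioi
      intro u (hu : t < u)
      dsimp only
      rw [min_eq_left (le_of_lt hu), ENNReal.ofReal_rpow_of_pos ht]
    rw [hcg, setLIntegral_const, tail_measure w μ hw_infty hμ_tail ht,
      ← ENNReal.ofReal_mul htp.le]
  have hbulk : ∫⁻ u in Ioc 0 t, (ENNReal.ofReal (min t u)) ^ (δ+2) ∂μ
      ≤ ENNReal.ofReal (c₀⁻¹ * 2 ^ δ * (t ^ (δ+2) * w t)) * ENNReal.ofReal (4/3) := by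
    rw [dyadic_cover ht]
    refine le_trans (lintegral_iUnion_le _ _) ?_
    have hterm : ∀ n : ℕ, ∫⁻ u in Ioc (t/2^(n+1)) (t/2^n), (ENNReal.ofReal (min t u)) ^ (δ+2) ∂μ
        ≤ ENNReal.ofReal (c₀⁻¹ * 2 ^ δ * (t ^ (δ+2) * w t)) * (ENNReal.ofReal (1/4))^n := by
      intro n
      have ha : (0:ℝ) < t/2^(n+1) := by positivity
      have hb : (0:ℝ) < t/2^n := by positivity
      have hab : t/2^(n+1) ≤ t/2^n := by
        apply div_le_div_of_nonneg_left ht.le (by positivity)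
        exact pow_le_pow_right₀ one_le_two (Nat.le_succ n)
      have hbn : (0:ℝ) ≤ (t/2^n) ^ (δ+2) := (Real.rpow_pos_of_pos hb _).le
      have hwa : 0 ≤ w (t/2^(n+1)) := hw_nonneg _ ha
      have hwscale : w (t/2^(n+1)) ≤ c₀⁻¹ * ((2:ℝ)^(n+1)) ^ δ * w t := by
        have h := w_scale_ub w δ t₀ c₀ hc₀ hw_nonneg hscale ha
          (hab.trans (div_le_self ht.le (one_le_pow₀ one_le_two))) htt
        rwa [show t/(t/2^(n+1)) = (2:ℝ)^(n+1) by field_simp] at h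
      calc ∫⁻ u in Ioc (t/2^(n+1)) (t/2^n), (ENNReal.ofReal (min t u)) ^ (δ+2) ∂μ
          ≤ ∫⁻ _ in Ioc (t/2^(n+1)) (t/2^n), ENNReal.ofReal (t/2^n) ^ (δ+2) ∂μ := by
            apply setLIntegral_mono measurable_const
            intro u hu
            apply ENNReal.rpow_le_rpow _ (by positivity)
            exact ENNReal.ofReal_le_ofReal ((min_le_right t u).trans hu.2)
        _ = ENNReal.ofReal (t/2^n) ^ (δ+2) * μ (Ioc (t/2^(n+1)) (t/2^n)) :=
            setLIntegral_const _ _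
        _ ≤ ENNReal.ofReal (t/2^n) ^ (δ+2) * ENNReal.ofReal (w (t/2^(n+1))) := by
            apply mul_le_mul_right
            rw [hμ_tail _ _ ha hab]
            exact ENNReal.ofReal_le_ofReal (by linarith [hw_nonneg _ hb])
        _ = ENNReal.ofReal ((t/2^n) ^ (δ+2) * w (t/2^(n+1))) := by
            rw [ENNReal.ofReal_rpow_of_pos hb, ← ENNReal.ofReal_mul hbn]
        _ ≤ ENNReal.ofReal ((t/2^n) ^ (δ+2) * (c₀⁻¹ * ((2:ℝ)^(n+1)) ^ δ * w t)) :=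
            ENNReal.ofReal_le_ofReal (mul_le_mul_of_nonneg_left hwscale hbn)
        _ = ENNReal.ofReal (c₀⁻¹ * 2 ^ δ * (t ^ (δ+2) * w t)) * (ENNReal.ofReal (1/4))^n := by
            rw [term_arith δ c₀ t (w t) ht n, ENNReal.ofReal_mul (by positivity),
              ENNReal.ofReal_pow (by norm_num)]
    calc ∑' n, ∫⁻ u in Ioc (t/2^(n+1)) (t/2^n), (ENNReal.ofReal (min t u)) ^ (δ+2) ∂μ
        ≤ ∑' n : ℕ, ENNReal.ofReal (c₀⁻¹ * 2 ^ δ * (t ^ (δ+2) * w t)) * (ENNReal.ofReal (1/4))^n :=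
          ENNReal.tsum_le_tsum hterm
      _ = ENNReal.ofReal (c₀⁻¹ * 2 ^ δ * (t ^ (δ+2) * w t)) * ∑' n : ℕ, (ENNReal.ofReal (1/4))^n :=
          ENNReal.tsum_mul_left
      _ = ENNReal.ofReal (c₀⁻¹ * 2 ^ δ * (t ^ (δ+2) * w t)) * ENNReal.ofReal (4/3) := by
          congr 1
          rw [ENNReal.tsum_geometric]
          rw [show (1:ℝ≥0∞) - ENNReal.ofReal (1/4) = ENNReal.ofReal (3/4) by
            rw [← ENNReal.ofReal_one, ← ENNReal.ofReal_sub _ (by norm_num)]; norm_num]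
          rw [← ENNReal.ofReal_inv_of_pos (by norm_num)]
          norm_num
  calc ∫⁻ u, (ENNReal.ofReal (min t u)) ^ (δ+2) ∂μ
      = ∫⁻ u in Ioc 0 t, (ENNReal.ofReal (min t u)) ^ (δ+2) ∂μ
        + ∫⁻ u in Ioi t, (ENNReal.ofReal (min t u)) ^ (δ+2) ∂μ := by
        rw [← hrestr, hsplit, lintegral_union measurableSet_Ioi hdisj]
    _ ≤ ENNReal.ofReal (c₀⁻¹ * 2 ^ δ * (t ^ (δ+2) * w t)) * ENNReal.ofReal (4/3)
        + ENNReal.ofReal (t ^ (δ+2) * w t) := by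
        rw [htail]
        exact add_le_add_left hbulk _
    _ ≤ ENNReal.ofReal ((1 + c₀⁻¹ * 2 ^ δ * (4/3)) * (t ^ (δ+2) * w t)) := by
        rw [← ENNReal.ofReal_mul (by positivity),
          ← ENNReal.ofReal_add (by positivity) (by positivity)]
        apply ENNReal.ofReal_le_ofReal
        nlinarith [htp.le, hwt]

lemma holder_step (μ : Measure ℝ) (X : ℝ → ℝ≥0∞) (hX : Measurable X)
    (hXtop : ∀ u, X u ≠ ⊤) (δ : ℝ) (hδ : 2 ≤ δ) :
    (∫⁻ u, X u ^ (2:ℝ) ∂μ) ^ (δ+1) ≤ (∫⁻ u, X u ∂μ) ^ δ * (∫⁻ u, X u ^ (δ+2) ∂μ) := by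
  have hδ0 : (0:ℝ) < δ := by linarith
  have hδ1 : (0:ℝ) < δ + 1 := by linarith
  have hpq : ((δ+1)/δ).HolderConjugate (δ+1) := by
    rw [Real.holderConjugate_iff]
    constructor
    · rw [lt_div_iff₀ hδ0]; linarith
    · field_simp
  have hfm : AEMeasurable (fun u => X u ^ (δ/(δ+1))) μ :=
    (hX.pow_const (δ/(δ+1))).aemeasurable
  have hgm : AEMeasurable (fun u => X u ^ ((δ+2)/(δ+1))) μ :=
    (hX.pow_const ((δ+2)/(δ+1))).aemeasurable
  have key := ENNReal.lintegral_mul_le_Lp_mul_Lq μ hpq hfm hgm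
  have hfg : ∀ u, ((fun u => X u ^ (δ/(δ+1))) * (fun u => X u ^ ((δ+2)/(δ+1)))) u
      = X u ^ (2:ℝ) := by
    intro u
    simp only [Pi.mul_apply]
    rcases eq_or_ne (X u) 0 with h0 | h0
    · rw [h0, ENNReal.zero_rpow_of_pos (by positivity), ENNReal.zero_rpow_of_pos (by positivity),
        ENNReal.zero_rpow_of_pos (by norm_num), mul_zero]
    · rw [← ENNReal.rpow_add _ _ h0 (hXtop u)]
      congr 1
      field_simp
      ring
  have hfp : ∀ u, (X u ^ (δ/(δ+1))) ^ ((δ+1)/δ) = X u := by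
    intro u
    rw [← ENNReal.rpow_mul]
    rw [show δ/(δ+1) * ((δ+1)/δ) = 1 by field_simp]
    exact ENNReal.rpow_one _
  have hgq : ∀ u, (X u ^ ((δ+2)/(δ+1))) ^ (δ+1) = X u ^ (δ+2) := by
    intro u
    rw [← ENNReal.rpow_mul]
    congr 1
    field_simp
  simp_rw [hfg, hfp, hgq] at key
  calc (∫⁻ u, X u ^ (2:ℝ) ∂μ) ^ (δ+1)
      ≤ ((∫⁻ u, X u ∂μ) ^ (1/((δ+1)/δ)) * (∫⁻ u, X u ^ (δ+2) ∂μ) ^ (1/(δ+1))) ^ (δ+1) :=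
        ENNReal.rpow_le_rpow key (by linarith)
    _ = (∫⁻ u, X u ∂μ) ^ δ * (∫⁻ u, X u ^ (δ+2) ∂μ) := by
        rw [ENNReal.mul_rpow_of_nonneg _ _ (by linarith), ← ENNReal.rpow_mul, ← ENNReal.rpow_mul]
        rw [show 1/((δ+1)/δ) * (δ+1) = δ by field_simp,
          show 1/(δ+1) * (δ+1) = 1 by field_simp]
        rw [ENNReal.rpow_one]

lemma H_repr (w φ H : ℝ → ℝ) (μ : Measure ℝ)
    (hμ_supp : μ (Iic 0) = 0)
    (hμ_int : ∫⁻ s, ENNReal.ofReal (min 1 s) ∂μ < ⊤)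
    (hφ : ∀ l, 0 ≤ l → φ l = ∫ s, (1 - Real.exp (-l * s)) ∂μ)
    (hH : ∀ l, 0 < l → H l = φ l - l * deriv φ l)
    {l : ℝ} (hl : 0 < l) :
    0 ≤ H l ∧ ENNReal.ofReal (H l)
      ≤ ENNReal.ofReal l ^ (2:ℝ) * ∫⁻ u, ENNReal.ofReal (min l⁻¹ u) ^ (2:ℝ) ∂μ := by
  have hint1 := integrable_one_sub_exp μ hμ_supp hμ_int hl
  have hder := hasDerivAt_phi_int μ hμ_supp hμ_int hl
  have hφeq : φ =ᶠ[nhds l] fun x => ∫ s, (1 - Real.exp (-x * s)) ∂μ := by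
    filter_upwards [Ioi_mem_nhds hl] with x hx
    exact hφ x (le_of_lt hx)
  have hderiv : deriv φ l = ∫ s, s * Real.exp (-l * s) ∂μ := by
    rw [hφeq.deriv_eq]
    exact hder.2.deriv
  have hHeq : H l = ∫ s, (1 - Real.exp (-l*s) - l * (s * Real.exp (-l*s))) ∂μ := by
    rw [hH l hl, hφ l hl.le, hderiv, ← integral_const_mul,
      ← integral_sub hint1 (hder.1.const_mul l)]
  have hkey : ∀ s : ℝ, 1 - Real.exp (-l*s) - l*(s*Real.exp (-l*s))
      = 1 - (1 + l*s)*Real.exp (-(l*s)) := by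
    intro s; rw [neg_mul]; ring
  have hnn : 0 ≤ H l := by
    rw [hHeq]
    apply integral_nonneg_of_ae
    filter_upwards [ae_pos μ hμ_supp] with s hs
    rw [hkey s]
    exact exp_ineq2_nonneg (by positivity)
  refine ⟨hnn, ?_⟩
  rw [hHeq]
  calc ENNReal.ofReal (∫ s, (1 - Real.exp (-l*s) - l * (s * Real.exp (-l*s))) ∂μ)
      = ∫⁻ s, ENNReal.ofReal (1 - Real.exp (-l*s) - l * (s * Real.exp (-l*s))) ∂μ :=
        ofReal_integral_eq_lintegral_ofReal (hint1.sub (hder.1.const_mul l)) (by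
          filter_upwards [ae_pos μ hμ_supp] with s hs
          rw [hkey s]
          exact exp_ineq2_nonneg (by positivity))
    _ ≤ ∫⁻ s, ENNReal.ofReal l ^ (2:ℝ) * ENNReal.ofReal (min l⁻¹ s) ^ (2:ℝ) ∂μ := by
        apply lintegral_mono_ae
        filter_upwards [ae_pos μ hμ_supp] with s hs
        rw [hkey s]
        have hmin : min (l*s) 1 = l * min s l⁻¹ := by
          rw [mul_min_of_nonneg _ _ hl.le, mul_inv_cancel₀ hl.ne']
        have hreal : 1 - (1 + l*s)*Real.exp (-(l*s)) ≤ (l * min l⁻¹ s)^2 := by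
          calc 1 - (1 + l*s)*Real.exp (-(l*s)) ≤ (min (l*s) 1)^2 := exp_ineq2 (by positivity)
            _ = (l * min l⁻¹ s)^2 := by rw [hmin, min_comm]
        calc ENNReal.ofReal (1 - (1 + l*s)*Real.exp (-(l*s)))
            ≤ ENNReal.ofReal ((l * min l⁻¹ s)^2) := ENNReal.ofReal_le_ofReal hreal
          _ = (ENNReal.ofReal l * ENNReal.ofReal (min l⁻¹ s))^(2:ℕ) := by
              rw [← ENNReal.ofReal_mul hl.le, ← ENNReal.ofReal_pow (by positivity)]
          _ = ENNReal.ofReal l ^ (2:ℝ) * ENNReal.ofReal (min l⁻¹ s) ^ (2:ℝ) := by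
              rw [mul_pow]
              rw [show (2:ℝ) = ((2:ℕ):ℝ) by norm_num, ENNReal.rpow_natCast,
                ENNReal.rpow_natCast]
    _ = ENNReal.ofReal l ^ (2:ℝ) * ∫⁻ s, ENNReal.ofReal (min l⁻¹ s) ^ (2:ℝ) ∂μ := by
        rw [lintegral_const_mul']
        exact ENNReal.rpow_ne_top_of_nonneg (by norm_num) ENNReal.ofReal_ne_top

lemma phi_lb (φ : ℝ → ℝ) (μ : Measure ℝ)
    (hμ_supp : μ (Iic 0) = 0)
    (hμ_int : ∫⁻ s, ENNReal.ofReal (min 1 s) ∂μ < ⊤)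
    (hφ : ∀ l, 0 ≤ l → φ l = ∫ s, (1 - Real.exp (-l * s)) ∂μ)
    {l : ℝ} (hl : 0 < l) :
    0 ≤ φ l ∧ ENNReal.ofReal (l/2) * ∫⁻ u, ENNReal.ofReal (min l⁻¹ u) ∂μ
      ≤ ENNReal.ofReal (φ l) := by
  have hint1 := integrable_one_sub_exp μ hμ_supp hμ_int hl
  have hae : ∀ᵐ s ∂μ, 0 ≤ 1 - Real.exp (-l * s) := by
    filter_upwards [ae_pos μ hμ_supp] with s hs
    have : Real.exp (-l * s) ≤ 1 := by
      rw [Real.exp_le_one_iff]; nlinarith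
    linarith
  have hnn : 0 ≤ φ l := by
    rw [hφ l hl.le]
    exact integral_nonneg_of_ae hae
  refine ⟨hnn, ?_⟩
  have heq : ENNReal.ofReal (φ l) = ∫⁻ s, ENNReal.ofReal (1 - Real.exp (-l * s)) ∂μ := by
    rw [hφ l hl.le]
    exact ofReal_integral_eq_lintegral_ofReal hint1 hae
  rw [heq, ← lintegral_const_mul' _ _ ENNReal.ofReal_ne_top]
  apply lintegral_mono_ae
  filter_upwards [ae_pos μ hμ_supp] with s hs
  have hmin : min (l*s) 1 = l * min s l⁻¹ := by
    rw [mul_min_of_nonneg _ _ hl.le, mul_inv_cancel₀ hl.ne']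
  calc ENNReal.ofReal (l/2) * ENNReal.ofReal (min l⁻¹ s)
      = ENNReal.ofReal ((1/2) * min (l*s) 1) := by
        rw [← ENNReal.ofReal_mul (by positivity)]
        congr 1
        rw [hmin, min_comm]
        ring
    _ ≤ ENNReal.ofReal (1 - Real.exp (-l * s)) := by
        apply ENNReal.ofReal_le_ofReal
        have := exp_ineq1 (x := l*s) (by positivity)
        rw [neg_mul]
        linarith

/-- If `w` satisfies (Ker.) and a lower scaling condition near the origin with
index `-δ`, `δ ≥ 2`, then `H(t⁻¹)^{δ+1} ≤ c₁ φ(t⁻¹)^δ w(t)` for `0 < t ≤ t₀`. -/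
theorem H_power_bound_small_time
    (w φ H : ℝ → ℝ) (μ : Measure ℝ) (δ t₀ c₀ : ℝ)
    (hδ : 2 ≤ δ) (ht₀ : 0 < t₀) (hc₀ : 0 < c₀)
    (hw_nonneg : ∀ s, 0 < s → 0 ≤ w s)
    (hw_anti : ∀ s t, 0 < s → s ≤ t → w t ≤ w s)
    (hw_rc : ∀ s, 0 < s → Tendsto w (nhdsWithin s (Ioi s)) (nhds (w s)))
    (hw_zero : Tendsto w (nhdsWithin 0 (Ioi 0)) atTop)
    (hw_infty : Tendsto w atTop (nhds 0))
    (hμ_supp : μ (Iic 0) = 0)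
    (hμ_tail : ∀ a b, 0 < a → a ≤ b → μ (Ioc a b) = ENNReal.ofReal (w a - w b))
    (hμ_int : ∫⁻ s, ENNReal.ofReal (min 1 s) ∂μ < ⊤)
    (hscale : ∀ r R, 0 < r → r ≤ R → R ≤ t₀ → c₀ * (R / r) ^ (-δ) ≤ w R / w r)
    (hφ : ∀ l, 0 ≤ l → φ l = ∫ s, (1 - Real.exp (-l * s)) ∂μ)
    (hH : ∀ l, 0 < l → H l = φ l - l * deriv φ l) :
    ∃ c₁ : ℝ, 0 < c₁ ∧ ∀ t, 0 < t → t ≤ t₀ →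
      H t⁻¹ ^ (δ + 1) ≤ c₁ * φ t⁻¹ ^ δ * w t := by
  set K : ℝ := 1 + c₀⁻¹ * 2 ^ δ * (4/3) with hK
  have hKpos : 0 < K := by rw [hK]; positivity
  have h2δpos : (0:ℝ) < 2 ^ δ := Real.rpow_pos_of_pos two_pos δ
  refine ⟨K * 2 ^ δ, mul_pos hKpos h2δpos, ?_⟩
  intro t ht htt
  set l : ℝ := t⁻¹ with hldef
  have hl : 0 < l := inv_pos.mpr ht
  have hlinv : l⁻¹ = t := inv_inv t
  have hδ0 : (0:ℝ) ≤ δ := by linarith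
  have hδ1 : (0:ℝ) ≤ δ + 1 := by linarith
  -- the three μ-side integrals
  set X : ℝ → ℝ≥0∞ := fun u => ENNReal.ofReal (min t u) with hX
  have hXmeas : Measurable X := (measurable_const.min measurable_id).ennreal_ofReal
  have hXtop : ∀ u, X u ≠ ⊤ := fun u => ENNReal.ofReal_ne_top
  set A : ℝ≥0∞ := ∫⁻ u, X u ∂μ with hA
  set B : ℝ≥0∞ := ∫⁻ u, X u ^ (2:ℝ) ∂μ with hB
  set M : ℝ≥0∞ := ∫⁻ u, X u ^ (δ+2) ∂μ with hM
  obtain ⟨h0H, hHb⟩ := H_repr w φ H μ hμ_supp hμ_int hφ hH hl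
  obtain ⟨h0φ, hφb⟩ := phi_lb φ μ hμ_supp hμ_int hφ hl
  rw [hlinv] at hHb hφb
  have hHol : B ^ (δ+1) ≤ A ^ δ * M := holder_step μ X hXmeas hXtop δ hδ
  have hMb : M ≤ ENNReal.ofReal (K * (t ^ (δ+2) * w t)) :=
    M_bound w μ δ t₀ c₀ hδ hc₀ hw_nonneg hw_infty hμ_supp hμ_tail hscale ht htt
  -- positivity facts
  have h0w : 0 ≤ w t := hw_nonneg t ht
  have hl2 : (0:ℝ) < l/2 := by linarith
  have hl2δ : (0:ℝ) < (l/2) ^ δ := Real.rpow_pos_of_pos hl2 δ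
  -- main ENNReal chain
  have main : ENNReal.ofReal (H l) ^ (δ+1) * ENNReal.ofReal ((l/2) ^ δ)
      ≤ ENNReal.ofReal (φ l) ^ δ * (ENNReal.ofReal (K * 2 ^ δ * w t) * ENNReal.ofReal ((l/2) ^ δ)) := by
    calc ENNReal.ofReal (H l) ^ (δ+1) * ENNReal.ofReal ((l/2) ^ δ)
        ≤ (ENNReal.ofReal l ^ (2:ℝ) * B) ^ (δ+1) * ENNReal.ofReal ((l/2) ^ δ) :=
          mul_le_mul_left (ENNReal.rpow_le_rpow hHb hδ1) _
      _ = ENNReal.ofReal l ^ (2*(δ+1)) * B ^ (δ+1) * ENNReal.ofReal ((l/2) ^ δ) := by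
          rw [ENNReal.mul_rpow_of_nonneg _ _ hδ1, ← ENNReal.rpow_mul]
      _ ≤ ENNReal.ofReal l ^ (2*(δ+1)) * (A ^ δ * M) * ENNReal.ofReal ((l/2) ^ δ) := by
          apply mul_le_mul_left
          exact mul_le_mul_right hHol _
      _ = (ENNReal.ofReal (l/2) * A) ^ δ * (ENNReal.ofReal l ^ (2*(δ+1)) * M) := by
          rw [ENNReal.mul_rpow_of_nonneg _ _ hδ0, ENNReal.ofReal_rpow_of_pos hl2]
          ring
      _ ≤ ENNReal.ofReal (φ l) ^ δ * (ENNReal.ofReal l ^ (2*(δ+1)) * M) :=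
          mul_le_mul_left (ENNReal.rpow_le_rpow hφb hδ0) _
      _ ≤ ENNReal.ofReal (φ l) ^ δ * (ENNReal.ofReal l ^ (2*(δ+1))
            * ENNReal.ofReal (K * (t ^ (δ+2) * w t))) :=
          mul_le_mul_right (mul_le_mul_right hMb _) _
      _ = ENNReal.ofReal (φ l) ^ δ * (ENNReal.ofReal (K * 2 ^ δ * w t) * ENNReal.ofReal ((l/2) ^ δ)) := by
          congr 1
          rw [ENNReal.ofReal_rpow_of_pos hl, ← ENNReal.ofReal_mul (Real.rpow_pos_of_pos hl _).le,
            ← ENNReal.ofReal_mul (by positivity)]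
          congr 1
          -- real computation
          have e1 : t ^ (δ+2) = l ^ (-(δ+2)) := by
            rw [← hlinv, Real.inv_rpow hl.le, Real.rpow_neg hl.le]
          have e2 : (l/2) ^ δ = l ^ δ / 2 ^ δ := by
            rw [Real.div_rpow hl.le (by norm_num : (0:ℝ) ≤ 2)]
          have e3 : l ^ (2*(δ+1)) * l ^ (-(δ+2)) = l ^ δ := by
            rw [← Real.rpow_add hl]
            congr 1
            ring
          have h2δ : (0:ℝ) < 2 ^ δ := Real.rpow_pos_of_pos two_pos δ
          have lhs' : l ^ (2*(δ+1)) * (K * (t ^ (δ+2) * w t)) = K * w t * l ^ δ := by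
            rw [e1]
            calc l ^ (2*(δ+1)) * (K * (l ^ (-(δ+2)) * w t))
                = (l ^ (2*(δ+1)) * l ^ (-(δ+2))) * (K * w t) := by ring
              _ = K * w t * l ^ δ := by rw [e3]; ring
          rw [lhs', e2]
          field_simp
  -- cancel the factor ofReal ((l/2)^δ)
  have hcne : ENNReal.ofReal ((l/2) ^ δ) ≠ 0 := by
    simp [ENNReal.ofReal_eq_zero, not_le, hl2δ]
  have main2 : ENNReal.ofReal (H l) ^ (δ+1)
      ≤ ENNReal.ofReal (φ l) ^ δ * ENNReal.ofReal (K * 2 ^ δ * w t) := by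
    rw [← ENNReal.mul_le_mul_iff_left hcne ENNReal.ofReal_ne_top, mul_assoc]
    exact main
  -- convert back to reals
  have hfinal : ENNReal.ofReal (H l ^ (δ+1)) ≤ ENNReal.ofReal (K * 2 ^ δ * φ l ^ δ * w t) := by
    rw [← ENNReal.ofReal_rpow_of_nonneg h0H hδ1]
    calc ENNReal.ofReal (H l) ^ (δ+1)
        ≤ ENNReal.ofReal (φ l) ^ δ * ENNReal.ofReal (K * 2 ^ δ * w t) := main2
      _ = ENNReal.ofReal (K * 2 ^ δ * φ l ^ δ * w t) := by
          rw [ENNReal.ofReal_rpow_of_nonneg h0φ hδ0,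
            ← ENNReal.ofReal_mul (Real.rpow_nonneg h0φ _)]
          congr 1
          ring
  have hrhs : 0 ≤ K * 2 ^ δ * φ l ^ δ * w t := by
    have := Real.rpow_nonneg h0φ δ
    positivity
  exact (ENNReal.ofReal_le_ofReal_iff hrhs).mp hfinal
end

section
/- Let w satisfy condition (Ker.) and suppose there exist δ > 0, t₀ > 0, c₀ > 0 such that w(R)/w(r) ≥ c₀ (R/r)^{−δ} for all t₀ ≤ r ≤ R. Then there is a constant c₁ > 0 such that for every t ≥ t₀, φ(t^{−1})^{δ+1} ≤ c₁ w(t), where φ(λ) = ∫₀^∞ (1 − e^{−λs})(−dw(s)). -/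
open MeasureTheory Real Set Filter

/-- If `w` satisfies (Ker.) and a lower scaling condition at infinity with index
`-δ`, then `φ(t⁻¹)^{δ+1} ≤ c₁ w(t)` for `t ≥ t₀`. -/
theorem phi_power_bound_large_time
    (w φ : ℝ → ℝ) (μ : Measure ℝ) (δ t₀ c₀ : ℝ)
    (hδ : 0 < δ) (ht₀ : 0 < t₀) (hc₀ : 0 < c₀)
    (hw_nonneg : ∀ s, 0 < s → 0 ≤ w s)
    (hw_anti : ∀ s t, 0 < s → s ≤ t → w t ≤ w s)
    (hw_rc : ∀ s, 0 < s → Tendsto w (nhdsWithin s (Ioi s)) (nhds (w s)))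
    (hw_zero : Tendsto w (nhdsWithin 0 (Ioi 0)) atTop)
    (hw_infty : Tendsto w atTop (nhds 0))
    (hμ_supp : μ (Iic 0) = 0)
    (hμ_tail : ∀ a b, 0 < a → a ≤ b → μ (Ioc a b) = ENNReal.ofReal (w a - w b))
    (hμ_int : ∫⁻ s, ENNReal.ofReal (min 1 s) ∂μ < ⊤)
    (hscale : ∀ r R, t₀ ≤ r → r ≤ R → c₀ * (R / r) ^ (-δ) ≤ w R / w r)
    (hφ : ∀ l, 0 ≤ l → φ l = ∫ s, (1 - Real.exp (-l * s)) ∂μ) :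
    ∃ c₁ : ℝ, 0 < c₁ ∧ ∀ t, t₀ ≤ t →
      φ t⁻¹ ^ (δ + 1) ≤ c₁ * w t := by
  have hδ1 : (0:ℝ) < δ + 1 := by linarith
  set θ : ℝ := δ / (δ + 1) with hθdef
  have hθpos : 0 < θ := div_pos hδ hδ1
  have hθlt1 : θ < 1 := by rw [hθdef, div_lt_one hδ1]; linarith
  have h1θ : 1 - θ = 1 / (δ + 1) := by rw [hθdef]; field_simp; ring
  have hθδ : θ = δ * (1 - θ) := by rw [h1θ, hθdef]; field_simp
  -- `w t₀ > 0`
  have hwt₀ : 0 < w t₀ := by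
    rcases lt_or_eq_of_le (hw_nonneg t₀ ht₀) with h | h
    · exact h
    · exfalso
      have hs := hscale t₀ t₀ le_rfl le_rfl
      rw [← h, div_zero, div_self ht₀.ne', Real.one_rpow, mul_one] at hs
      linarith
  have hwpos : ∀ t, t₀ ≤ t → 0 < w t := by
    intro t ht
    have htpos : 0 < t := lt_of_lt_of_le ht₀ ht
    have hs := hscale t₀ t le_rfl ht
    have hb : 0 < c₀ * (t / t₀) ^ (-δ) := by positivity
    by_contra h
    have h0 : w t = 0 := le_antisymm (not_lt.mp h) (hw_nonneg t htpos)
    rw [h0, zero_div] at hs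
    linarith
  -- lower bound from scaling
  have hwlow : ∀ t, t₀ ≤ t → c₀ * (t₀ / t) ^ δ * w t₀ ≤ w t := by
    intro t ht
    have htpos : 0 < t := lt_of_lt_of_le ht₀ ht
    have hs := hscale t₀ t le_rfl ht
    have hrw : (t / t₀) ^ (-δ) = (t₀ / t) ^ δ := by
      rw [Real.rpow_neg (by positivity), ← Real.inv_rpow (by positivity), inv_div]
    rw [hrw] at hs
    exact (le_div_iff₀ hwt₀).mp hs
  -- upper bound from scaling
  have hwupper : ∀ u t, t₀ ≤ u → u ≤ t → w u ≤ c₀⁻¹ * (t / u) ^ δ * w t := by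
    intro u t hu hut
    have hupos : 0 < u := lt_of_lt_of_le ht₀ hu
    have htpos : 0 < t := lt_of_lt_of_le (lt_of_lt_of_le ht₀ hu) hut
    have hdiv : 0 < t / u := by positivity
    have hs := hscale u t hu hut
    have hwu := hwpos u hu
    rw [le_div_iff₀ hwu, Real.rpow_neg hdiv.le] at hs
    have hx : 0 < (t/u) ^ δ := Real.rpow_pos_of_pos hdiv δ
    have key : w u = (c₀⁻¹ * (t/u) ^ δ) * (c₀ * ((t/u) ^ δ)⁻¹ * w u) := by
      field_simp
    rw [key]
    calc (c₀⁻¹ * (t/u) ^ δ) * (c₀ * ((t/u) ^ δ)⁻¹ * w u)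
        ≤ (c₀⁻¹ * (t/u) ^ δ) * w t := mul_le_mul_of_nonneg_left hs (by positivity)
      _ = c₀⁻¹ * (t/u) ^ δ * w t := by ring
  -- ae-helper
  have hae : ∀ P : ℝ → Prop, ({s : ℝ | ¬ P s} ⊆ Iic 0) → (∀ᵐ s ∂μ, P s) := by
    intro P hP
    rw [ae_iff]
    exact measure_mono_null hP hμ_supp
  -- measure of `Ioi u`
  have μIoi : ∀ u : ℝ, 0 < u → μ (Ioi u) = ENNReal.ofReal (w u) := by
    intro u hu
    have hmono : Monotone (fun n : ℕ => Ioc u (u + (n+1))) := by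
      intro m n hmn
      apply Ioc_subset_Ioc le_rfl
      have : (m:ℝ) ≤ n := Nat.cast_le.mpr hmn
      linarith
    have hunion : (⋃ n : ℕ, Ioc u (u + (n+1))) = Ioi u := by
      ext x
      simp only [mem_iUnion, mem_Ioc, mem_Ioi]
      constructor
      · rintro ⟨n, h1, _⟩; exact h1
      · intro hx
        obtain ⟨n, hn⟩ := exists_nat_gt (x - u)
        exact ⟨n, hx, by push_cast; linarith⟩
    have h1 : Tendsto (fun n : ℕ => μ (Ioc u (u + (n+1)))) atTop (nhds (μ (Ioi u))) := by
      have := tendsto_measure_iUnion_atTop (μ := μ) hmono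
      rwa [hunion] at this
    have h2 : Tendsto (fun n : ℕ => μ (Ioc u (u + (n+1)))) atTop
        (nhds (ENNReal.ofReal (w u))) := by
      have heq : (fun n : ℕ => μ (Ioc u (u + (n+1))))
          = fun n : ℕ => ENNReal.ofReal (w u - w (u + (n+1))) := by
        funext n
        exact hμ_tail u (u + (n+1)) hu (by have : (0:ℝ) ≤ (n:ℝ) := Nat.cast_nonneg n; linarith)
      rw [heq]
      have hw0 : Tendsto (fun n : ℕ => w (u + (n+1))) atTop (nhds 0) := by
        apply hw_infty.comp
        apply tendsto_atTop_mono (f := fun n : ℕ => (n:ℝ))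
        · intro n; linarith [hu]
        · exact tendsto_natCast_atTop_atTop
      have hsub : Tendsto (fun n : ℕ => w u - w (u + (n+1))) atTop (nhds (w u - 0)) :=
        tendsto_const_nhds.sub hw0
      rw [sub_zero] at hsub
      exact (ENNReal.continuous_ofReal.tendsto _).comp hsub
    exact tendsto_nhds_unique h1 h2
  -- layer cake identity
  have layer : ∀ c : ℝ, 0 < c →
      (∫⁻ s, ENNReal.ofReal (min c s) ∂μ) = ∫⁻ u in Ioo 0 c, ENNReal.ofReal (w u) := by
    intro c hc
    have f_nn : 0 ≤ᵐ[μ] fun s : ℝ => min c s := by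
      apply hae
      intro s hs
      simp only [mem_setOf_eq, not_le] at hs
      simp only [mem_Iic]
      by_contra hpos
      push_neg at hpos
      exact absurd (le_min hc.le hpos.le) (not_le.mpr hs)
    have f_mble : AEMeasurable (fun s : ℝ => min c s) μ :=
      (measurable_const.min measurable_id).aemeasurable
    rw [lintegral_eq_lintegral_meas_lt μ f_nn f_mble]
    have hcong : ∀ᵐ u ∂(volume : Measure ℝ), u ∈ Ioi (0:ℝ) →
        μ {a : ℝ | u < min c a} = (Ioo (0:ℝ) c).indicator (fun u => ENNReal.ofReal (w u)) u := by
      apply ae_of_all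
      intro u hu
      by_cases huc : u < c
      · have hset : {a : ℝ | u < min c a} = Ioi u := by
          ext x; simp [lt_min_iff, huc, mem_Ioi]
        rw [hset, μIoi u (mem_Ioi.mp hu), indicator_of_mem (mem_Ioo.mpr ⟨mem_Ioi.mp hu, huc⟩)]
      · have hset : {a : ℝ | u < min c a} = ∅ := by
          ext x
          simp only [mem_setOf_eq, lt_min_iff, mem_empty_iff_false, iff_false, not_and]
          intro h; exact absurd h huc
        rw [hset, measure_empty, indicator_of_notMem (by simp [mem_Ioo]; intro _; exact le_of_not_gt huc)]
    rw [setLIntegral_congr_fun_ae measurableSet_Ioi hcong,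
        setLIntegral_indicator measurableSet_Ioo,
        inter_eq_left.mpr Ioo_subset_Ioi_self]
  -- finiteness of the small-scale integral
  have hL₀fin : (∫⁻ s, ENNReal.ofReal (min t₀ s) ∂μ) < ⊤ := by
    have hb : ∀ᵐ s ∂μ, ENNReal.ofReal (min t₀ s)
        ≤ ENNReal.ofReal (max 1 t₀) * ENNReal.ofReal (min 1 s) := by
      apply hae
      intro s hs
      simp only [mem_setOf_eq, mem_Iic] at *
      by_contra hpos
      push_neg at hpos
      apply hs
      rw [← ENNReal.ofReal_mul (by positivity : (0:ℝ) ≤ max 1 t₀)]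
      apply ENNReal.ofReal_le_ofReal
      rcases le_or_gt s 1 with h1 | h1
      · rw [min_eq_right h1]
        calc min t₀ s ≤ s := min_le_right _ _
          _ ≤ max 1 t₀ * s := le_mul_of_one_le_left hpos.le (le_max_left _ _)
      · rw [min_eq_left h1.le, mul_one]
        calc min t₀ s ≤ t₀ := min_le_left _ _
          _ ≤ max 1 t₀ := le_max_right _ _
    calc (∫⁻ s, ENNReal.ofReal (min t₀ s) ∂μ)
        ≤ ∫⁻ s, ENNReal.ofReal (max 1 t₀) * ENNReal.ofReal (min 1 s) ∂μ := lintegral_mono_ae hb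
      _ = ENNReal.ofReal (max 1 t₀) * ∫⁻ s, ENNReal.ofReal (min 1 s) ∂μ :=
          lintegral_const_mul' _ _ ENNReal.ofReal_ne_top
      _ < ⊤ := ENNReal.mul_lt_top ENNReal.ofReal_lt_top hμ_int
  set a : ℝ := (∫⁻ s, ENNReal.ofReal (min t₀ s) ∂μ).toReal with hadef
  have ha0 : 0 ≤ a := ENNReal.toReal_nonneg
  set C : ℝ := a / t₀ * ((c₀ * w t₀)⁻¹) ^ (1-θ) + (δ+1) * (w t₀) ^ θ * (c₀⁻¹) ^ (1-θ) with hCdef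
  have hCpos : 0 < C := by
    have h1 : 0 ≤ a / t₀ * ((c₀ * w t₀)⁻¹) ^ (1-θ) := by positivity
    have h2 : 0 < (δ+1) * (w t₀) ^ θ * (c₀⁻¹) ^ (1-θ) := by positivity
    rw [hCdef]
    linarith
  refine ⟨C ^ (δ+1), Real.rpow_pos_of_pos hCpos _, ?_⟩
  intro t ht
  have htpos : 0 < t := lt_of_lt_of_le ht₀ ht
  have hwt : 0 < w t := hwpos t ht
  have hwtnn : 0 ≤ w t := hwt.le
  set K : ℝ := (w t₀) ^ θ * (c₀⁻¹ * w t) ^ (1-θ) with hKdef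
  have hK0 : 0 ≤ K := by positivity
  -- pointwise upper bound on [t₀, t)
  have hptw : ∀ u, u ∈ Ico t₀ t → w u ≤ K * (t/u) ^ θ := by
    intro u hu
    have hupos : 0 < u := lt_of_lt_of_le ht₀ hu.1
    have hwu : 0 < w u := hwpos u hu.1
    have hdiv : 0 < t / u := by positivity
    have e1 : w u = (w u) ^ θ * (w u) ^ (1-θ) := by
      rw [← Real.rpow_add hwu, show θ + (1-θ) = 1 by ring, Real.rpow_one]
    rw [e1, hKdef]
    have b1 : (w u) ^ θ ≤ (w t₀) ^ θ :=
      Real.rpow_le_rpow hwu.le (hw_anti t₀ u ht₀ hu.1) hθpos.le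
    have b2 : (w u) ^ (1-θ) ≤ (c₀⁻¹ * w t) ^ (1-θ) * (t/u) ^ θ := by
      calc (w u) ^ (1-θ) ≤ (c₀⁻¹ * (t/u) ^ δ * w t) ^ (1-θ) :=
            Real.rpow_le_rpow hwu.le (hwupper u t hu.1 hu.2.le) (by linarith)
        _ = (c₀⁻¹ * w t) ^ (1-θ) * (t/u) ^ θ := by
            rw [show c₀⁻¹ * (t/u) ^ δ * w t = (c₀⁻¹ * w t) * (t/u) ^ δ by ring,
               Real.mul_rpow (by positivity) (by positivity),
               ← Real.rpow_mul hdiv.le, ← hθδ]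
    calc (w u) ^ θ * (w u) ^ (1-θ)
        ≤ (w t₀) ^ θ * ((c₀⁻¹ * w t) ^ (1-θ) * (t/u) ^ θ) :=
          mul_le_mul b1 b2 (by positivity) (by positivity)
      _ = (w t₀) ^ θ * (c₀⁻¹ * w t) ^ (1-θ) * (t/u) ^ θ := by ring
  -- integral of (t/u)^θ over (0, t]
  have hE : ∫⁻ u in Ioc 0 t, ENNReal.ofReal ((t/u) ^ θ) = ENNReal.ofReal ((δ+1) * t) := by
    have hInt1 : IntegrableOn (fun u : ℝ => u ^ (-θ)) (Ioc 0 t) := by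
      rw [← intervalIntegrable_iff_integrableOn_Ioc_of_le htpos.le]
      exact intervalIntegral.intervalIntegrable_rpow' (by linarith)
    have heq : EqOn (fun u : ℝ => t ^ θ * u ^ (-θ)) (fun u : ℝ => (t/u) ^ θ) (Ioc 0 t) := by
      intro u hu
      simp only
      rw [Real.div_rpow htpos.le hu.1.le, Real.rpow_neg hu.1.le, div_eq_mul_inv]
    have hInt2 : IntegrableOn (fun u : ℝ => t ^ θ * u ^ (-θ)) (Ioc 0 t) :=
      hInt1.const_mul (t ^ θ)
    have hInt : IntegrableOn (fun u : ℝ => (t/u) ^ θ) (Ioc 0 t) :=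
      hInt2.congr_fun heq measurableSet_Ioc
    have hnn : 0 ≤ᵐ[volume.restrict (Ioc (0:ℝ) t)] fun u : ℝ => (t/u) ^ θ := by
      filter_upwards [ae_restrict_mem measurableSet_Ioc] with u hu
      have : 0 < t/u := div_pos htpos hu.1
      positivity
    rw [← ofReal_integral_eq_lintegral_ofReal hInt hnn]
    congr 1
    rw [setIntegral_congr_fun measurableSet_Ioc heq.symm]
    rw [MeasureTheory.integral_const_mul]
    have hone : ∫ u in Ioc (0:ℝ) t, u ^ (-θ) = t ^ (1-θ) / (1-θ) := by
      rw [← intervalIntegral.integral_of_le htpos.le,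
          integral_rpow (Or.inl (by linarith : (-1:ℝ) < -θ)),
          Real.zero_rpow (by linarith : -θ + 1 ≠ 0),
          show -θ + 1 = 1 - θ by ring, sub_zero]
    rw [hone, div_eq_mul_inv, ← mul_assoc, ← Real.rpow_add htpos,
        show θ + (1-θ) = 1 by ring, Real.rpow_one, h1θ, one_div, inv_inv]
    ring
  -- the main splitting bound
  have hpart2 : ∫⁻ u in Ico t₀ t, ENNReal.ofReal (w u) ≤ ENNReal.ofReal (K * ((δ+1) * t)) := by
    calc ∫⁻ u in Ico t₀ t, ENNReal.ofReal (w u)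
        ≤ ∫⁻ u in Ico t₀ t, ENNReal.ofReal (K * (t/u) ^ θ) := by
          apply lintegral_mono_ae
          filter_upwards [ae_restrict_mem measurableSet_Ico] with u hu
          exact ENNReal.ofReal_le_ofReal (hptw u hu)
      _ ≤ ∫⁻ u in Ioc 0 t, ENNReal.ofReal (K * (t/u) ^ θ) :=
          lintegral_mono_set (fun x hx => ⟨lt_of_lt_of_le ht₀ hx.1, hx.2.le⟩)
      _ = ∫⁻ u in Ioc 0 t, ENNReal.ofReal K * ENNReal.ofReal ((t/u) ^ θ) :=
          lintegral_congr (fun u => by rw [ENNReal.ofReal_mul hK0])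
      _ = ENNReal.ofReal K * ∫⁻ u in Ioc 0 t, ENNReal.ofReal ((t/u) ^ θ) :=
          lintegral_const_mul' _ _ ENNReal.ofReal_ne_top
      _ = ENNReal.ofReal K * ENNReal.ofReal ((δ+1)*t) := by rw [hE]
      _ = ENNReal.ofReal (K * ((δ+1)*t)) := (ENNReal.ofReal_mul hK0).symm
  have hJtle : (∫⁻ s, ENNReal.ofReal (min t s) ∂μ)
      ≤ ENNReal.ofReal a + ENNReal.ofReal (K * ((δ+1) * t)) := by
    rw [layer t htpos]
    have hsub : Ioo (0:ℝ) t ⊆ Ioo 0 t₀ ∪ Ico t₀ t := by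
      intro x hx
      rcases lt_or_ge x t₀ with h|h
      · exact Or.inl ⟨hx.1, h⟩
      · exact Or.inr ⟨h, hx.2⟩
    calc ∫⁻ u in Ioo 0 t, ENNReal.ofReal (w u)
        ≤ ∫⁻ u in Ioo 0 t₀ ∪ Ico t₀ t, ENNReal.ofReal (w u) := lintegral_mono_set hsub
      _ ≤ (∫⁻ u in Ioo 0 t₀, ENNReal.ofReal (w u)) + ∫⁻ u in Ico t₀ t, ENNReal.ofReal (w u) :=
          lintegral_union_le _ _ _
      _ ≤ ENNReal.ofReal a + ENNReal.ofReal (K * ((δ+1)*t)) := by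
          apply add_le_add _ hpart2
          rw [← layer t₀ ht₀, hadef]
          exact le_of_eq (ENNReal.ofReal_toReal hL₀fin.ne).symm
  have hJtfin : (∫⁻ s, ENNReal.ofReal (min t s) ∂μ) ≠ ⊤ :=
    (lt_of_le_of_lt hJtle (ENNReal.add_lt_top.mpr
      ⟨ENNReal.ofReal_lt_top, ENNReal.ofReal_lt_top⟩)).ne
  have hJtR : (∫⁻ s, ENNReal.ofReal (min t s) ∂μ).toReal ≤ a + K * ((δ+1)*t) := by
    have h1 := ENNReal.toReal_mono (ENNReal.add_lt_top.mpr
      ⟨ENNReal.ofReal_lt_top, ENNReal.ofReal_lt_top⟩).ne hJtle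
    rwa [← ENNReal.ofReal_add ha0 (by positivity), ENNReal.toReal_ofReal (by positivity)] at h1
  -- the value of φ
  have hφeq : φ t⁻¹ = (∫⁻ s, ENNReal.ofReal (1 - Real.exp (-t⁻¹ * s)) ∂μ).toReal := by
    rw [hφ t⁻¹ (by positivity)]
    apply integral_eq_lintegral_of_nonneg_ae
    · apply hae
      intro s hs
      simp only [mem_setOf_eq, not_le, Pi.zero_apply] at hs
      rw [mem_Iic]
      by_contra hpos
      push_neg at hpos
      have hle : Real.exp (-t⁻¹ * s) ≤ 1 := by
        apply Real.exp_le_one_iff.mpr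
        have h0 : 0 ≤ t⁻¹ * s := mul_nonneg (inv_pos.mpr htpos).le hpos.le
        linarith
      linarith
    · exact Continuous.aestronglyMeasurable (by fun_prop)
  have hlin : (∫⁻ s, ENNReal.ofReal (1 - Real.exp (-t⁻¹ * s)) ∂μ)
      ≤ ENNReal.ofReal t⁻¹ * ∫⁻ s, ENNReal.ofReal (min t s) ∂μ := by
    rw [← lintegral_const_mul' _ _ ENNReal.ofReal_ne_top]
    apply lintegral_mono
    intro s
    dsimp only
    rw [← ENNReal.ofReal_mul (by positivity : (0:ℝ) ≤ t⁻¹)]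
    apply ENNReal.ofReal_le_ofReal
    rcases le_total t s with h | h
    · rw [min_eq_left h, inv_mul_cancel₀ htpos.ne']
      linarith [Real.exp_nonneg (-t⁻¹ * s)]
    · rw [min_eq_right h]
      have := Real.add_one_le_exp (-t⁻¹ * s)
      nlinarith
  have hφle : φ t⁻¹ ≤ t⁻¹ * (a + K * ((δ+1)*t)) := by
    rw [hφeq]
    have h1 := ENNReal.toReal_mono (ENNReal.mul_ne_top ENNReal.ofReal_ne_top hJtfin) hlin
    rw [ENNReal.toReal_mul, ENNReal.toReal_ofReal (by positivity)] at h1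
    exact h1.trans (mul_le_mul_of_nonneg_left hJtR (by positivity))
  -- assemble the final bound
  have hkey : φ t⁻¹ ≤ C * w t ^ (1-θ) := by
    have e1 : t⁻¹ * (a + K * ((δ+1)*t)) = a / t + (δ+1) * K := by
      field_simp
    have hb1 : a / t ≤ a / t₀ * ((c₀ * w t₀)⁻¹) ^ (1-θ) * w t ^ (1-θ) := by
      have h0 : (0:ℝ) < t₀ / t := by positivity
      have h1 : t₀ / t ≤ 1 := by rw [div_le_one htpos]; exact ht
      have h2 : (t₀/t) ≤ (t₀/t) ^ θ := by
        have := Real.rpow_le_rpow_of_exponent_ge h0 h1 hθlt1.le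
        rwa [Real.rpow_one] at this
      have h3 : (t₀/t) ^ θ = ((t₀/t) ^ δ) ^ (1-θ) := by
        rw [← Real.rpow_mul h0.le, ← hθδ]
      have h4 : (t₀/t) ^ δ ≤ w t / (c₀ * w t₀) := by
        rw [le_div_iff₀ (by positivity)]
        calc (t₀/t) ^ δ * (c₀ * w t₀) = c₀ * (t₀/t) ^ δ * w t₀ := by ring
          _ ≤ w t := hwlow t ht
      have h5 : ((t₀/t) ^ δ) ^ (1-θ) ≤ (w t / (c₀ * w t₀)) ^ (1-θ) :=
        Real.rpow_le_rpow (by positivity) h4 (by linarith)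
      have h6 : (w t / (c₀ * w t₀)) ^ (1-θ) = ((c₀ * w t₀)⁻¹) ^ (1-θ) * w t ^ (1-θ) := by
        rw [div_eq_mul_inv, Real.mul_rpow hwtnn (by positivity)]
        ring
      calc a / t = a / t₀ * (t₀ / t) := by
            field_simp
        _ ≤ a / t₀ * ((w t / (c₀ * w t₀)) ^ (1-θ)) := by
            apply mul_le_mul_of_nonneg_left _ (by positivity)
            calc t₀/t ≤ (t₀/t) ^ θ := h2
              _ = ((t₀/t) ^ δ) ^ (1-θ) := h3
              _ ≤ (w t/(c₀ * w t₀)) ^ (1-θ) := h5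
        _ = a / t₀ * ((c₀ * w t₀)⁻¹) ^ (1-θ) * w t ^ (1-θ) := by rw [h6]; ring
    have hb2 : (δ+1) * K = (δ+1) * (w t₀) ^ θ * (c₀⁻¹) ^ (1-θ) * w t ^ (1-θ) := by
      rw [hKdef, Real.mul_rpow (by positivity) hwtnn]
      ring
    calc φ t⁻¹ ≤ t⁻¹ * (a + K * ((δ+1)*t)) := hφle
      _ = a / t + (δ+1) * K := e1
      _ ≤ a / t₀ * ((c₀ * w t₀)⁻¹) ^ (1-θ) * w t ^ (1-θ)
            + (δ+1) * (w t₀) ^ θ * (c₀⁻¹) ^ (1-θ) * w t ^ (1-θ) := add_le_add hb1 hb2.le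
      _ = C * w t ^ (1-θ) := by rw [hCdef]; ring
  have hφnn : 0 ≤ φ t⁻¹ := by rw [hφeq]; exact ENNReal.toReal_nonneg
  calc φ t⁻¹ ^ (δ+1) ≤ (C * w t ^ (1-θ)) ^ (δ+1) :=
      Real.rpow_le_rpow hφnn hkey (by linarith)
    _ = C ^ (δ+1) * w t := by
        rw [Real.mul_rpow hCpos.le (Real.rpow_nonneg hwtnn _), ← Real.rpow_mul hwtnn,
            h1θ, show 1/(δ+1) * (δ+1) = 1 by field_simp, Real.rpow_one]
end

section
/- Let φ be the Laplace exponent of a driftless subordinator with Lévy tail w satisfying (Ker.), let H(λ) = φ(λ) − λφ'(λ), and define b(s) = s φ'(H^{−1}(1/s)) for s > 0. Then b is strictly increasing on (0,∞), b(s) → 0 as s → 0, and b(s) → ∞ as s → ∞. -/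
open MeasureTheory Real Set Filter

/-- `b(s) = s φ'(H⁻¹(1/s))` is strictly increasing on `(0,∞)`, tends to `0`
at `0+` and to `∞` at `∞`. -/
theorem b_strictMono_and_limits
    (w φ H Hinv b : ℝ → ℝ) (μ : Measure ℝ)
    (hw_nonneg : ∀ s, 0 < s → 0 ≤ w s)
    (hw_anti : ∀ s t, 0 < s → s ≤ t → w t ≤ w s)
    (hw_rc : ∀ s, 0 < s → Tendsto w (nhdsWithin s (Ioi s)) (nhds (w s)))
    (hw_zero : Tendsto w (nhdsWithin 0 (Ioi 0)) atTop)
    (hw_infty : Tendsto w atTop (nhds 0))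
    (hμ_supp : μ (Iic 0) = 0)
    (hμ_tail : ∀ a b, 0 < a → a ≤ b → μ (Ioc a b) = ENNReal.ofReal (w a - w b))
    (hμ_int : ∫⁻ s, ENNReal.ofReal (min 1 s) ∂μ < ⊤)
    (hφ : ∀ l, 0 ≤ l → φ l = ∫ s, (1 - Real.exp (-l * s)) ∂μ)
    (hH : ∀ l, 0 < l → H l = φ l - l * deriv φ l)
    (hH_mono : StrictMonoOn H (Ioi 0))
    (hφ'_anti : StrictAntiOn (deriv φ) (Ioi 0))
    (hφ'_pos : ∀ l, 0 < l → 0 < deriv φ l)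
    (hHinv : ∀ y, 0 < y → 0 < Hinv y ∧ H (Hinv y) = y)
    (hb : ∀ s, 0 < s → b s = s * deriv φ (Hinv s⁻¹)) :
    StrictMonoOn b (Ioi 0) ∧
      Tendsto b (nhdsWithin 0 (Ioi 0)) (nhds 0) ∧
      Tendsto b atTop atTop := by
  -- `Hinv` is monotone on `(0,∞)`
  have hinv_mono : ∀ y z : ℝ, 0 < y → y ≤ z → Hinv y ≤ Hinv z := by
    intro y z hy hyz
    by_contra hcon
    push_neg at hcon
    have h1 := (hHinv y hy)
    have h2 := (hHinv z (lt_of_lt_of_le hy hyz))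
    have := hH_mono (mem_Ioi.2 h2.1) (mem_Ioi.2 h1.1) hcon
    rw [h1.2, h2.2] at this
    exact absurd hyz (not_le.2 this)
  have hinv_strict : ∀ y z : ℝ, 0 < y → y < z → Hinv y < Hinv z := by
    intro y z hy hyz
    refine lt_of_le_of_ne (hinv_mono y z hy hyz.le) fun he => ?_
    have h1 := (hHinv y hy)
    have h2 := (hHinv z (hy.trans hyz))
    rw [← h1.2, ← h2.2, he] at hyz
    exact lt_irrefl _ hyz
  set C := deriv φ (Hinv 1) with hC
  have hC_pos : 0 < C := hφ'_pos _ (hHinv 1 one_pos).1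
  have hanti := hφ'_anti.antitoneOn
  refine ⟨?_, ?_, ?_⟩
  · -- strict monotonicity
    intro s hs t ht hst
    rw [hb s hs, hb t ht]
    have hs' : (0:ℝ) < s⁻¹ := inv_pos.2 hs
    have ht' : (0:ℝ) < t⁻¹ := inv_pos.2 ht
    have hlt : t⁻¹ < s⁻¹ := by
      exact (one_div t ▸ one_div s ▸ one_div_lt_one_div_of_lt hs hst)
    have hinvlt : Hinv t⁻¹ < Hinv s⁻¹ := hinv_strict _ _ ht' hlt
    have hd : deriv φ (Hinv s⁻¹) < deriv φ (Hinv t⁻¹) :=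
      hφ'_anti (mem_Ioi.2 (hHinv _ ht').1) (mem_Ioi.2 (hHinv _ hs').1) hinvlt
    have hds : 0 < deriv φ (Hinv s⁻¹) := hφ'_pos _ (hHinv _ hs').1
    exact mul_lt_mul hst hd.le hds (le_of_lt ht)
  · -- limit at 0+
    have hupper : ∀ᶠ s in nhdsWithin (0:ℝ) (Ioi 0), b s ≤ C * s := by
      filter_upwards [Ioc_mem_nhdsGT_of_mem (by simp : (0:ℝ) ∈ Ico (0:ℝ) 1)]
        with s hs
      obtain ⟨hs0, hs1⟩ := hs
      have hs' : (0:ℝ) < s⁻¹ := inv_pos.2 hs0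
      have h1s : (1:ℝ) ≤ s⁻¹ := (one_le_inv₀ hs0).2 hs1
      have hmono : Hinv 1 ≤ Hinv s⁻¹ := hinv_mono _ _ one_pos h1s
      have hd : deriv φ (Hinv s⁻¹) ≤ C :=
        hanti (mem_Ioi.2 (hHinv 1 one_pos).1) (mem_Ioi.2 (hHinv _ hs').1) hmono
      rw [hb s hs0, mul_comm C s]
      exact mul_le_mul_of_nonneg_left hd hs0.le
    have hlower : ∀ᶠ s in nhdsWithin (0:ℝ) (Ioi 0), 0 ≤ b s := by
      filter_upwards [self_mem_nhdsWithin] with s hs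
      rw [hb s hs]
      exact mul_nonneg (le_of_lt hs) (hφ'_pos _ (hHinv _ (inv_pos.2 hs)).1).le
    have hCs : Tendsto (fun s : ℝ => C * s) (nhdsWithin (0:ℝ) (Ioi 0)) (nhds 0) := by
      have : Tendsto (fun s : ℝ => C * s) (nhds 0) (nhds (C * 0)) :=
        (continuous_const.mul continuous_id).tendsto 0
      simpa using this.mono_left nhdsWithin_le_nhds
    exact tendsto_of_tendsto_of_tendsto_of_le_of_le' tendsto_const_nhds hCs hlower hupper
  · -- limit at ∞
    have hlower : ∀ᶠ s in (atTop : Filter ℝ), C * s ≤ b s := by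
      filter_upwards [eventually_ge_atTop (1:ℝ)] with s hs1
      have hs0 : (0:ℝ) < s := lt_of_lt_of_le one_pos hs1
      have hs' : (0:ℝ) < s⁻¹ := inv_pos.2 hs0
      have hle : s⁻¹ ≤ 1 := inv_le_one_of_one_le₀ hs1
      have hmono : Hinv s⁻¹ ≤ Hinv 1 := hinv_mono _ _ hs' hle
      have hd : C ≤ deriv φ (Hinv s⁻¹) :=
        hanti (mem_Ioi.2 (hHinv _ hs').1) (mem_Ioi.2 (hHinv 1 one_pos).1) hmono
      rw [hb s hs0, mul_comm C s]
      exact mul_le_mul_of_nonneg_left hd hs0.le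
    have hCs : Tendsto (fun s : ℝ => C * s) atTop atTop :=
      Tendsto.const_mul_atTop hC_pos tendsto_id
    exact tendsto_atTop_mono' _ hlower hCs
end

section
/- Let φ, H, b be as follows: φ is the Laplace exponent of a driftless subordinator with Lévy tail w satisfying (Ker.), H(λ) = φ(λ) − λφ'(λ), and b(s) = s φ'(H^{−1}(1/s)). Then for every s > 0, φ(s^{−1})^{−1} ≤ b^{−1}(s) ≤ ((e²−e)/(e−2)) φ(s^{−1})^{−1}. -/
/-!
Since `b` is strictly increasing, the two bounds reduce to `b (φ s⁻¹)⁻¹ ≤ s ≤ b (C * (φ s⁻¹)⁻¹)`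
with `C = (e² - e)/(e - 2)`. The first follows from `0 ≤ H ≤ φ`: `H ≤ φ` gives
`s⁻¹ ≤ H⁻¹ (φ s⁻¹)`, and `0 ≤ H` gives `φ' s⁻¹ ≤ s φ s⁻¹`. For the second, write
`I c = ∫_{(0,c]} t μ(dt)`; comparing `1 - e^{-x}`, `x e^{-x}` and `1 - (1 + x) e^{-x}` with
`min x 1`, `e⁻¹ x` and `(1 - 2/e) 1_{x > 1}` gives `φ λ ≤ λ I c + w c`, `φ' λ ≥ e⁻¹ I λ⁻¹` and
`H λ ≥ (1 - 2/e) w λ⁻¹`, and these three bounds at `λ = H⁻¹ (φ s⁻¹ / C)` combine exactly to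
`b (C * (φ s⁻¹)⁻¹) ≥ s`.
-/

open MeasureTheory Real Set Filter Topology

lemma one_add_mul_exp_neg_le_one (x : ℝ) : (1 + x) * exp (-x) ≤ 1 := by
  calc (1 + x) * exp (-x) ≤ exp x * exp (-x) := by gcongr; linarith [add_one_le_exp x]
    _ = 1 := by rw [← exp_add, add_neg_cancel, exp_zero]

lemma one_add_mul_exp_neg_le_two_div_exp_one {x : ℝ} (hx : 1 ≤ x) :
    (1 + x) * exp (-x) ≤ 2 / exp 1 := by
  calc (1 + x) * exp (-x) ≤ 2 * exp (x - 1) * exp (-x) := by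
        gcongr; linarith [add_one_le_exp (x - 1)]
    _ = 2 / exp 1 := by rw [mul_assoc, ← exp_add, div_eq_mul_inv, ← exp_neg]; ring_nf

lemma exp_one_sq_sub_exp_one_div_pos : 0 < (exp 1 ^ 2 - exp 1) / (exp 1 - 2) := by
  have := exp_one_gt_two
  exact div_pos (by nlinarith) (by linarith)

lemma measure_Ioi_eq_ofReal_of_measure_Ioc {μ : Measure ℝ} {w : ℝ → ℝ}
    (hw : Tendsto w atTop (𝓝 0)) {a : ℝ}
    (hμ : ∀ b, a ≤ b → μ (Ioc a b) = ENNReal.ofReal (w a - w b)) :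
    μ (Ioi a) = ENNReal.ofReal (w a) := by
  have hmono : Monotone fun b ↦ Ioc a b := fun _ _ h ↦ Ioc_subset_Ioc_right h
  have hlim := tendsto_measure_iUnion_atTop (μ := μ) hmono
  rw [iUnion_Ioc_right] at hlim
  refine tendsto_nhds_unique hlim ?_
  have hw' : Tendsto (fun b ↦ ENNReal.ofReal (w a - w b)) atTop (𝓝 (ENNReal.ofReal (w a))) :=
    (ENNReal.continuous_ofReal.tendsto _).comp (by simpa using tendsto_const_nhds.sub hw)
  exact hw'.congr' ((eventually_ge_atTop a).mono fun b hb ↦ (hμ b hb).symm)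

noncomputable def laplaceExponent (μ : Measure ℝ) (l : ℝ) : ℝ :=
  ∫ t, (1 - exp (-l * t)) ∂μ

section LevyMeasure

variable {μ : Measure ℝ}

lemma integrable_one_sub_exp_neg_mul (hpos : ∀ᵐ t ∂μ, 0 < t)
    (hint : Integrable (fun t ↦ min 1 t) μ) {l : ℝ} (hl : 0 ≤ l) :
    Integrable (fun t ↦ 1 - exp (-l * t)) μ := by
  refine (hint.const_mul (max 1 l)).mono' (by fun_prop) ?_
  filter_upwards [hpos] with t ht
  have h0 : 0 ≤ 1 - exp (-l * t) := sub_nonneg.2 (exp_le_one_iff.2 (by nlinarith))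
  have hle : 1 - exp (-l * t) ≤ l * t := by
    linarith [neg_mul l t ▸ one_sub_le_exp_neg (l * t)]
  rw [norm_of_nonneg h0]
  rcases le_total t 1 with h | h
  · rw [min_eq_right h]
    exact hle.trans (by gcongr; exact le_max_right 1 l)
  · rw [min_eq_left h, mul_one]
    linarith [le_max_left 1 l, exp_pos (-l * t)]

lemma mul_exp_neg_mul_le_s5 {l t : ℝ} (hl : 0 < l) :
    t * exp (-l * t) ≤ l⁻¹ * (1 - exp (-l * t)) := by
  rw [le_inv_mul_iff₀ hl, neg_mul]
  linarith [one_add_mul_exp_neg_le_one (l * t)]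

lemma integrable_mul_exp_neg_mul (hpos : ∀ᵐ t ∂μ, 0 < t)
    (hint : Integrable (fun t ↦ min 1 t) μ) {l : ℝ} (hl : 0 < l) :
    Integrable (fun t ↦ t * exp (-l * t)) μ := by
  refine ((integrable_one_sub_exp_neg_mul hpos hint hl.le).const_mul l⁻¹).mono' (by fun_prop) ?_
  filter_upwards [hpos] with t ht
  rw [norm_of_nonneg (by positivity)]
  exact mul_exp_neg_mul_le_s5 hl

lemma integrableOn_id_Ioc_of_integrable_min (hint : Integrable (fun t ↦ min 1 t) μ) (c : ℝ) :
    IntegrableOn (fun t ↦ t) (Ioc 0 c) μ := by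
  refine (hint.integrableOn.const_mul (max 1 c)).mono' (by fun_prop) ?_
  refine (ae_restrict_iff' measurableSet_Ioc).2 (ae_of_all _ fun t ⟨ht, htc⟩ ↦ ?_)
  rw [norm_of_nonneg ht.le]
  rcases le_total t 1 with h | h
  · rw [min_eq_right h]; nlinarith [le_max_left 1 c]
  · rw [min_eq_left h, mul_one]; exact htc.trans (le_max_right 1 c)

lemma measure_Ioi_lt_top_of_integrable_min (hint : Integrable (fun t ↦ min 1 t) μ) {c : ℝ}
    (hc : 0 < c) :
    μ (Ioi c) < ⊤ :=
  (measure_mono fun t (ht : c < t) ↦ min_le_min_left 1 ht.le).trans_lt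
    (hint.measure_ge_lt_top (lt_min one_pos hc))

theorem hasDerivAt_laplaceExponent (hpos : ∀ᵐ t ∂μ, 0 < t)
    (hint : Integrable (fun t ↦ min 1 t) μ) {l : ℝ} (hl : 0 < l) :
    HasDerivAt (laplaceExponent μ) (∫ t, t * exp (-l * t) ∂μ) l := by
  refine (hasDerivAt_integral_of_dominated_loc_of_deriv_le (F := fun x t ↦ 1 - exp (-x * t))
    (F' := fun x t ↦ t * exp (-x * t)) (Ioi_mem_nhds (half_lt_self hl))
    (.of_forall fun x ↦ by fun_prop) (integrable_one_sub_exp_neg_mul hpos hint hl.le)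
    (by fun_prop) ?_ (integrable_mul_exp_neg_mul hpos hint (half_pos hl)) ?_).2
  · filter_upwards [hpos] with t ht x (hx : l / 2 < x)
    rw [norm_of_nonneg (by positivity)]
    gcongr
  · refine ae_of_all _ fun t x _ ↦ ?_
    convert (((hasDerivAt_neg x).mul_const t).exp.const_sub 1) using 1
    ring

lemma inv_exp_one_mul_setIntegral_le (hpos : ∀ᵐ t ∂μ, 0 < t)
    (hint : Integrable (fun t ↦ min 1 t) μ) {l : ℝ} (hl : 0 < l) :
    (exp 1)⁻¹ * ∫ t in Ioc 0 l⁻¹, t ∂μ ≤ ∫ t, t * exp (-l * t) ∂μ := by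
  rw [← integral_const_mul]
  refine (setIntegral_mono_on ((integrableOn_id_Ioc_of_integrable_min hint _).const_mul _)
    (integrable_mul_exp_neg_mul hpos hint hl).integrableOn measurableSet_Ioc
    fun t ⟨ht, htl⟩ ↦ ?_).trans (setIntegral_le_integral (integrable_mul_exp_neg_mul hpos hint hl)
      (hpos.mono fun t ht ↦ by positivity))
  rw [mul_comm, ← exp_neg]
  gcongr
  rw [neg_mul, neg_le_neg_iff, ← not_lt, ← inv_lt_iff_one_lt_mul₀' hl, not_lt]
  exact htl

lemma laplaceExponent_le (hpos : ∀ᵐ t ∂μ, 0 < t) (hint : Integrable (fun t ↦ min 1 t) μ)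
    {l c : ℝ} (hl : 0 ≤ l) (hc : 0 < c) :
    laplaceExponent μ l ≤ l * ∫ t in Ioc 0 c, t ∂μ + μ.real (Ioi c) := by
  have hsmall := IntegrableOn.integrable_indicator
    ((integrableOn_id_Ioc_of_integrable_min hint c).const_mul l) measurableSet_Ioc
  have hlarge : Integrable ((Ioi c).indicator 1) μ :=
    (integrable_indicator_iff measurableSet_Ioi).2
      (integrableOn_const (C := (1 : ℝ)) (measure_Ioi_lt_top_of_integrable_min hint hc).ne)
  rw [← integral_const_mul, ← integral_indicator measurableSet_Ioc,
    ← integral_indicator_one measurableSet_Ioi, ← integral_add hsmall hlarge]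
  refine integral_mono_ae (integrable_one_sub_exp_neg_mul hpos hint hl) (hsmall.add hlarge) ?_
  filter_upwards [hpos] with t ht
  by_cases htc : t ≤ c
  · have hle : 1 - exp (-l * t) ≤ l * t := by
      linarith [neg_mul l t ▸ one_sub_le_exp_neg (l * t)]
    simpa [indicator_of_mem (show t ∈ Ioc 0 c from ⟨ht, htc⟩), not_lt.2 htc] using hle
  · simp [ht, htc, not_le.1 htc, (exp_pos _).le]

lemma mul_measureReal_Ioi_le (hpos : ∀ᵐ t ∂μ, 0 < t) (hint : Integrable (fun t ↦ min 1 t) μ)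
    {l : ℝ} (hl : 0 < l) :
    (1 - 2 / exp 1) * μ.real (Ioi l⁻¹) ≤
      laplaceExponent μ l - l * ∫ t, t * exp (-l * t) ∂μ := by
  have hint' := (integrable_mul_exp_neg_mul hpos hint hl).const_mul l
  have hlarge : Integrable ((Ioi l⁻¹).indicator fun _ ↦ 1 - 2 / exp 1) μ :=
    (integrable_indicator_iff measurableSet_Ioi).2
      (integrableOn_const (measure_Ioi_lt_top_of_integrable_min hint (inv_pos.2 hl)).ne)
  rw [laplaceExponent, ← integral_const_mul, ← integral_sub
    (integrable_one_sub_exp_neg_mul hpos hint hl.le) hint', mul_comm,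
    ← smul_eq_mul, ← integral_indicator_const _ measurableSet_Ioi]
  refine integral_mono_ae hlarge
    ((integrable_one_sub_exp_neg_mul hpos hint hl.le).sub hint') ?_
  filter_upwards [hpos] with t ht
  have hsplit : 1 - exp (-l * t) - l * (t * exp (-l * t)) = 1 - (1 + l * t) * exp (-(l * t)) := by
    rw [neg_mul]; ring
  rw [hsplit]
  by_cases htl : t ∈ Ioi l⁻¹
  · rw [indicator_of_mem htl]
    have := one_add_mul_exp_neg_le_two_div_exp_one ((inv_lt_iff_one_lt_mul₀' hl).1 htl).le
    linarith
  · rw [indicator_of_notMem htl]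
    linarith [one_add_mul_exp_neg_le_one (l * t)]

end LevyMeasure

section RightInverse

variable {f g : ℝ → ℝ} {x y : ℝ}

lemma StrictMonoOn.lt_rightInv_iff (hf : StrictMonoOn f (Ioi 0))
    (hg : ∀ y, 0 < y → 0 < g y ∧ f (g y) = y) (hx : 0 < x) (hy : 0 < y) :
    x < g y ↔ f x < y := by
  obtain ⟨hgy, hfgy⟩ := hg y hy
  rw [← hf.lt_iff_lt hx hgy, hfgy]

lemma StrictMonoOn.le_rightInv_iff (hf : StrictMonoOn f (Ioi 0))
    (hg : ∀ y, 0 < y → 0 < g y ∧ f (g y) = y) (hx : 0 < x) (hy : 0 < y) :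
    x ≤ g y ↔ f x ≤ y := by
  obtain ⟨hgy, hfgy⟩ := hg y hy
  rw [← hf.le_iff_le hx hgy, hfgy]

lemma StrictMonoOn.rightInv_le_iff (hf : StrictMonoOn f (Ioi 0))
    (hg : ∀ y, 0 < y → 0 < g y ∧ f (g y) = y) (hx : 0 < x) (hy : 0 < y) :
    g y ≤ x ↔ y ≤ f x := by
  rw [← not_lt, hf.lt_rightInv_iff hg hx hy, not_lt]

lemma StrictMonoOn.rightInv_strictMonoOn (hf : StrictMonoOn f (Ioi 0))
    (hg : ∀ y, 0 < y → 0 < g y ∧ f (g y) = y) : StrictMonoOn g (Ioi 0) :=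
  fun y₁ hy₁ y₂ hy₂ h ↦ (hf.lt_rightInv_iff hg (hg y₁ hy₁).1 hy₂).2 (by rwa [(hg y₁ hy₁).2])

end RightInverse

section Comparison

variable {φ φ' H Hinv b : ℝ → ℝ}

lemma strictMonoOn_mul_comp_inv (hH_mono : StrictMonoOn H (Ioi 0))
    (hφ'_anti : StrictAntiOn φ' (Ioi 0)) (hφ'_pos : ∀ l, 0 < l → 0 < φ' l)
    (hHinv : ∀ y, 0 < y → 0 < Hinv y ∧ H (Hinv y) = y)
    (hb : ∀ s, 0 < s → b s = s * φ' (Hinv s⁻¹)) : StrictMonoOn b (Ioi 0) := by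
  intro s₁ (hs₁ : 0 < s₁) s₂ (hs₂ : 0 < s₂) hs
  have hHinv_lt : Hinv s₂⁻¹ < Hinv s₁⁻¹ :=
    hH_mono.rightInv_strictMonoOn hHinv (inv_pos.2 hs₂) (inv_pos.2 hs₁) (inv_strictAnti₀ hs₁ hs)
  rw [hb s₁ hs₁, hb s₂ hs₂]
  exact mul_lt_mul'' hs (hφ'_anti (hHinv _ (inv_pos.2 hs₂)).1 (hHinv _ (inv_pos.2 hs₁)).1 hHinv_lt)
    hs₁.le (hφ'_pos _ (hHinv _ (inv_pos.2 hs₁)).1).le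

lemma apply_inv_le_of_nonneg (hH : ∀ l, 0 < l → H l = φ l - l * φ' l)
    (hH_nonneg : ∀ l, 0 < l → 0 ≤ H l) (hH_mono : StrictMonoOn H (Ioi 0))
    (hφ'_anti : StrictAntiOn φ' (Ioi 0)) (hφ'_pos : ∀ l, 0 < l → 0 < φ' l)
    (hHinv : ∀ y, 0 < y → 0 < Hinv y ∧ H (Hinv y) = y)
    (hb : ∀ s, 0 < s → b s = s * φ' (Hinv s⁻¹)) {s : ℝ} (hs : 0 < s) (hp : 0 < φ s⁻¹) :
    b (φ s⁻¹)⁻¹ ≤ s := by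
  set p := φ s⁻¹
  have hs' : 0 < s⁻¹ := inv_pos.2 hs
  have hH_lt : H s⁻¹ < p := by
    rw [hH _ hs']; linarith [mul_pos hs' (hφ'_pos _ hs')]
  have hlt_Hinv : s⁻¹ < Hinv p := (hH_mono.lt_rightInv_iff hHinv hs' hp).2 hH_lt
  have hφ'_le : φ' s⁻¹ ≤ s * p := by
    have := hH_nonneg _ hs'
    rw [hH _ hs', sub_nonneg, ← le_inv_mul_iff₀ hs', inv_inv] at this
    exact this
  rw [hb _ (inv_pos.2 hp), inv_inv]
  calc p⁻¹ * φ' (Hinv p) ≤ p⁻¹ * (s * p) := by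
        gcongr
        exact (hφ'_anti hs' (hHinv p hp).1 hlt_Hinv).le.trans hφ'_le
    _ = s := by field_simp

/-- `I c` stands for the truncated first moment `∫_{(0,c]} t dμ` and `W` for the Lévy tail. -/
lemma le_apply_mul_inv_of_bounds {I W : ℝ → ℝ}
    (hHinv : ∀ y, 0 < y → 0 < Hinv y ∧ H (Hinv y) = y)
    (hb : ∀ s, 0 < s → b s = s * φ' (Hinv s⁻¹))
    (hH_ge : ∀ l, 0 < l → (1 - 2 / exp 1) * W l⁻¹ ≤ H l)
    (hφ_le : ∀ l c, 0 < l → 0 < c → φ l ≤ l * I c + W c)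
    (hφ'_ge : ∀ l, 0 < l → (exp 1)⁻¹ * I l⁻¹ ≤ φ' l) {s : ℝ} (hs : 0 < s) (hp : 0 < φ s⁻¹) :
    s ≤ b ((exp 1 ^ 2 - exp 1) / (exp 1 - 2) * (φ s⁻¹)⁻¹) := by
  have he := exp_one_gt_two
  have he₁ : exp 1 - 1 ≠ 0 := by linarith
  have he₂ : exp 1 - 2 ≠ 0 := by linarith
  set C := (exp 1 ^ 2 - exp 1) / (exp 1 - 2) with hCdef
  set p := φ s⁻¹
  have hC : 0 < C := exp_one_sq_sub_exp_one_div_pos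
  obtain ⟨hm, hHm⟩ := hHinv (p / C) (div_pos hp hC)
  set m := Hinv (p / C)
  have hW : W m⁻¹ ≤ p / (exp 1 - 1) := by
    have h := hH_ge m hm
    rw [hHm, le_div_iff₀ hC] at h
    calc W m⁻¹ = (1 - 2 / exp 1) * W m⁻¹ * C / (exp 1 - 1) := by
          rw [hCdef]; field_simp
      _ ≤ p / (exp 1 - 1) := by gcongr; linarith
  have hI : s * (p - W m⁻¹) ≤ I m⁻¹ :=
    calc s * (p - W m⁻¹) ≤ s * (s⁻¹ * I m⁻¹) := by
          gcongr; linarith [hφ_le s⁻¹ m⁻¹ (inv_pos.2 hs) (inv_pos.2 hm)]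
      _ = I m⁻¹ := by field_simp
  have hφ'm : s * p / C ≤ φ' m :=
    calc s * p / C = (exp 1)⁻¹ * (s * (p - p / (exp 1 - 1))) := by
          rw [hCdef]; field_simp; ring
      _ ≤ (exp 1)⁻¹ * (s * (p - W m⁻¹)) := by gcongr
      _ ≤ (exp 1)⁻¹ * I m⁻¹ := by gcongr
      _ ≤ φ' m := hφ'_ge m hm
  calc s = C * p⁻¹ * (s * p / C) := by field_simp
    _ ≤ C * p⁻¹ * φ' m := by gcongr
    _ = b (C * p⁻¹) := by rw [hb _ (by positivity), mul_inv, inv_inv, ← div_eq_inv_mul]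

end Comparison

theorem b_inverse_comparable_phi_inverse_general
    (w φ H Hinv b binv : ℝ → ℝ) (μ : Measure ℝ)
    (hw_nonneg : ∀ s, 0 < s → 0 ≤ w s)
    (hw_infty : Tendsto w atTop (nhds 0))
    (hμ_supp : μ (Iic 0) = 0)
    (hμ_tail : ∀ a b, 0 < a → a ≤ b → μ (Ioc a b) = ENNReal.ofReal (w a - w b))
    (hμ_int : ∫⁻ s, ENNReal.ofReal (min 1 s) ∂μ < ⊤)
    (hφ : ∀ l, 0 ≤ l → φ l = ∫ s, (1 - Real.exp (-l * s)) ∂μ)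
    (hH : ∀ l, 0 < l → H l = φ l - l * deriv φ l)
    (hH_mono : StrictMonoOn H (Ioi 0))
    (hφ'_anti : StrictAntiOn (deriv φ) (Ioi 0))
    (hφ'_pos : ∀ l, 0 < l → 0 < deriv φ l)
    (hHinv : ∀ y, 0 < y → 0 < Hinv y ∧ H (Hinv y) = y)
    (hb : ∀ s, 0 < s → b s = s * deriv φ (Hinv s⁻¹))
    (hbinv : ∀ s, 0 < s → 0 < binv s ∧ b (binv s) = s)
    (hφpos : ∀ l, 0 < l → 0 < φ l) :
    ∀ s, 0 < s →
      (φ s⁻¹)⁻¹ ≤ binv s ∧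
      binv s ≤ (Real.exp 1 ^ 2 - Real.exp 1) / (Real.exp 1 - 2) * (φ s⁻¹)⁻¹ := by
  have hpos : ∀ᵐ t ∂μ, 0 < t :=
    (measure_eq_zero_iff_ae_notMem.1 hμ_supp).mono fun t ht ↦ not_le.1 ht
  have hint : Integrable (fun t ↦ min 1 t) μ :=
    (lintegral_ofReal_ne_top_iff_integrable (by fun_prop)
      (hpos.mono fun t ht ↦ le_min zero_le_one ht.le)).1 hμ_int.ne
  have hφ' : ∀ l, 0 < l → deriv φ l = ∫ t, t * exp (-l * t) ∂μ := fun l hl ↦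
    ((hasDerivAt_laplaceExponent hpos hint hl).congr_of_eventuallyEq
      (eventually_of_mem (Ioi_mem_nhds hl) fun x hx ↦ hφ x (le_of_lt hx))).deriv
  have hw : ∀ c, 0 < c → μ.real (Ioi c) = w c := fun c hc ↦ by
    rw [measureReal_def, measure_Ioi_eq_ofReal_of_measure_Ioc hw_infty (hμ_tail c · hc),
      ENNReal.toReal_ofReal (hw_nonneg c hc)]
  have hH_ge : ∀ l, 0 < l → (1 - 2 / exp 1) * w l⁻¹ ≤ H l := fun l hl ↦ by
    rw [hH l hl, hφ l hl.le, hφ' l hl, ← hw _ (inv_pos.2 hl)]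
    exact mul_measureReal_Ioi_le hpos hint hl
  have hH_nonneg : ∀ l, 0 < l → 0 ≤ H l := fun l hl ↦
    (mul_nonneg (sub_nonneg.2 ((div_le_one (exp_pos 1)).2 exp_one_gt_two.le))
      (hw_nonneg _ (inv_pos.2 hl))).trans (hH_ge l hl)
  have hb_mono := strictMonoOn_mul_comp_inv hH_mono hφ'_anti hφ'_pos hHinv hb
  intro s hs
  have hp := hφpos _ (inv_pos.2 hs)
  constructor
  · exact (hb_mono.le_rightInv_iff hbinv (inv_pos.2 hp) hs).2
      (apply_inv_le_of_nonneg hH hH_nonneg hH_mono hφ'_anti hφ'_pos hHinv hb hs hp)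
  · refine (hb_mono.rightInv_le_iff hbinv (mul_pos exp_one_sq_sub_exp_one_div_pos
      (inv_pos.2 hp)) hs).2 (le_apply_mul_inv_of_bounds (I := fun c ↦ ∫ t in Ioc 0 c, t ∂μ)
      hHinv hb hH_ge (fun l c hl hc ↦ ?_) (fun l hl ↦ ?_) hs hp)
    · rw [hφ l hl.le, ← hw c hc]
      exact laplaceExponent_le hpos hint hl.le hc
    · rw [hφ' l hl]
      exact inv_exp_one_mul_setIntegral_le hpos hint hl

/-- For every `s > 0`, `φ(s⁻¹)⁻¹ ≤ b⁻¹(s) ≤ ((e²-e)/(e-2)) φ(s⁻¹)⁻¹`, where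
`b(s) = s φ'(H⁻¹(1/s))`. -/
theorem b_inverse_comparable_phi_inverse
    (w φ H Hinv b binv : ℝ → ℝ) (μ : Measure ℝ)
    (hw_nonneg : ∀ s, 0 < s → 0 ≤ w s)
    (hw_anti : ∀ s t, 0 < s → s ≤ t → w t ≤ w s)
    (hw_rc : ∀ s, 0 < s → Tendsto w (nhdsWithin s (Ioi s)) (nhds (w s)))
    (hw_zero : Tendsto w (nhdsWithin 0 (Ioi 0)) atTop)
    (hw_infty : Tendsto w atTop (nhds 0))
    (hμ_supp : μ (Iic 0) = 0)
    (hμ_tail : ∀ a b, 0 < a → a ≤ b → μ (Ioc a b) = ENNReal.ofReal (w a - w b))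
    (hμ_int : ∫⁻ s, ENNReal.ofReal (min 1 s) ∂μ < ⊤)
    (hφ : ∀ l, 0 ≤ l → φ l = ∫ s, (1 - Real.exp (-l * s)) ∂μ)
    (hH : ∀ l, 0 < l → H l = φ l - l * deriv φ l)
    (hH_mono : StrictMonoOn H (Ioi 0))
    (hφ'_anti : StrictAntiOn (deriv φ) (Ioi 0))
    (hφ'_pos : ∀ l, 0 < l → 0 < deriv φ l)
    (hHinv : ∀ y, 0 < y → 0 < Hinv y ∧ H (Hinv y) = y)
    (hb : ∀ s, 0 < s → b s = s * deriv φ (Hinv s⁻¹))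
    (hbinv : ∀ s, 0 < s → 0 < binv s ∧ b (binv s) = s)
    (hφpos : ∀ l, 0 < l → 0 < φ l) :
    ∀ s, 0 < s →
      (φ s⁻¹)⁻¹ ≤ binv s ∧
      binv s ≤ (Real.exp 1 ^ 2 - Real.exp 1) / (Real.exp 1 - 2) * (φ s⁻¹)⁻¹ :=
  b_inverse_comparable_phi_inverse_general w φ H Hinv b binv μ hw_nonneg hw_infty hμ_supp hμ_tail
    hμ_int hφ hH hH_mono hφ'_anti hφ'_pos hHinv hb hbinv hφpos
end

section
/- Let t_f > 0, K ≥ 1, and let w : (0,∞) → [0,∞) be non-increasing with w(t) > 0 for t < t_f, w(t_f) = 0, and K^{−1}|t−s| ≤ |w(t)−w(s)| ≤ K|t−s| for all t_f/4 ≤ s ≤ t ≤ t_f. Let J₁, J₂, … be i.i.d. random variables with P(J_i ≥ u) = w(max{u, t_f/9}) / w(t_f/9). Then for every k ∈ ℕ and every u ∈ (0, t_f/4], P(Σ_{i=1}^k J_i ≥ k t_f − u) ≤ (K u / w(t_f/9))^k. -/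
open MeasureTheory Real Set Filter ProbabilityTheory

/-!
If every `J i` is almost surely at most `t_f`, the sum of `k` of them can only come within `u` of
`k t_f` when each of them is at least `t_f - u`; independence turns the probability of this into
the product of the `P(J i ≥ t_f - u) = w(t_f - u) / w(t_f / 9)`, and `w(t_f - u) ≤ K u` by the
Lipschitz bound at `t_f`, where `w` vanishes.
-/

theorem Finset.sub_le_of_card_nsmul_sub_le_sum {ι α : Type*} [AddCommGroup α] [PartialOrder α]
    [IsOrderedAddMonoid α] {s : Finset ι} {x : ι → α} {c u : α} (hx : ∀ j ∈ s, x j ≤ c)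
    (hsum : s.card • c - u ≤ ∑ j ∈ s, x j) {i : ι} (hi : i ∈ s) : c - u ≤ x i := by
  have hdefect : ∑ j ∈ s, (c - x j) ≤ u := by
    rw [Finset.sum_sub_distrib, Finset.sum_const]
    exact sub_le_comm.mp hsum
  have := (Finset.single_le_sum (fun j hj ↦ sub_nonneg.mpr (hx j hj)) hi).trans hdefect
  exact sub_le_comm.mp this

theorem ProbabilityTheory.iIndepFun.measure_card_nsmul_sub_le_sum_le_prod {Ω ι : Type*}
    [MeasurableSpace Ω] {P : Measure Ω} {J : ι → Ω → ℝ} (hJ : iIndepFun J P) {s : Finset ι}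
    {c : ℝ} (hbound : ∀ i ∈ s, ∀ᵐ ω ∂P, J i ω ≤ c) (u : ℝ) :
    P {ω | s.card • c - u ≤ ∑ i ∈ s, J i ω} ≤ ∏ i ∈ s, P {ω | c - u ≤ J i ω} := by
  have hsubset : {ω | s.card • c - u ≤ ∑ i ∈ s, J i ω} ≤ᵐ[P] ⋂ i ∈ s, {ω | c - u ≤ J i ω} := by
    filter_upwards [(eventually_all_finset s).mpr hbound] with ω hω hsum
    exact mem_iInter₂.mpr fun i hi ↦ Finset.sub_le_of_card_nsmul_sub_le_sum hω hsum hi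
  calc P {ω | s.card • c - u ≤ ∑ i ∈ s, J i ω}
      ≤ P (⋂ i ∈ s, {ω | c - u ≤ J i ω}) := measure_mono_ae hsubset
    _ = ∏ i ∈ s, P {ω | c - u ≤ J i ω} :=
      hJ.meas_biInter fun i _ ↦ ⟨Ici (c - u), measurableSet_Ici, rfl⟩

theorem iid_jump_sum_near_maximum_bound_general
    {Ω : Type*} [MeasurableSpace Ω] (P : Measure Ω) [IsProbabilityMeasure P]
    (J : ℕ → Ω → ℝ) (w : ℝ → ℝ) (t_f K : ℝ)
    (hw_pos : ∀ t, 0 < t → t < t_f → 0 < w t)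
    (hw_tf : w t_f = 0)
    (hw_lip : ∀ s t, t_f / 4 ≤ s → s ≤ t → t ≤ t_f →
      K⁻¹ * |t - s| ≤ |w t - w s| ∧ |w t - w s| ≤ K * |t - s|)
    (hJ_indep : iIndepFun J P)
    (hJ_dist : ∀ i : ℕ, ∀ u : ℝ, 0 < u →
      (P {ω | u ≤ J i ω}).toReal = w (max u (t_f / 9)) / w (t_f / 9)) :
    ∀ k : ℕ, ∀ u : ℝ, 0 < u → u ≤ t_f / 4 →
      (P {ω | (k : ℝ) * t_f - u ≤ ∑ i ∈ Finset.range k, J i ω}).toReal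
        ≤ (K * u / w (t_f / 9)) ^ k := by
  intro k u hu hu4
  have hw0 : 0 < w (t_f / 9) := hw_pos _ (by linarith) (by linarith)
  have hJ_le : ∀ i ∈ Finset.range k, ∀ᵐ ω ∂P, J i ω ≤ t_f := by
    intro i _
    have hnull : P {ω | t_f ≤ J i ω} = 0 := by
      have h := hJ_dist i t_f (by linarith)
      rw [max_eq_left (by linarith), hw_tf, zero_div] at h
      exact (ENNReal.toReal_eq_zero_iff _).mp h |>.resolve_right (measure_ne_top P _)
    exact ae_iff.mpr (measure_mono_null (fun ω hω ↦ (not_le.mp hω).le) hnull)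
  have hJ_tail : ∀ i, (P {ω | t_f - u ≤ J i ω}).toReal ≤ K * u / w (t_f / 9) := by
    intro i
    have hw_near : w (t_f - u) ≤ K * u := by
      have h := (hw_lip (t_f - u) t_f (by linarith) (by linarith) le_rfl).2
      rwa [hw_tf, zero_sub, abs_neg, sub_sub_cancel, abs_of_pos hu,
        abs_of_pos (hw_pos _ (by linarith) (by linarith))] at h
    rw [hJ_dist i _ (by linarith), max_eq_left (by linarith)]
    gcongr
  have hsum := hJ_indep.measure_card_nsmul_sub_le_sum_le_prod hJ_le u
  rw [Finset.card_range, nsmul_eq_mul] at hsum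
  calc (P {ω | (k : ℝ) * t_f - u ≤ ∑ i ∈ Finset.range k, J i ω}).toReal
      ≤ (∏ i ∈ Finset.range k, P {ω | t_f - u ≤ J i ω}).toReal :=
        ENNReal.toReal_mono (by simp [ENNReal.prod_ne_top, measure_ne_top]) hsum
    _ = ∏ i ∈ Finset.range k, (P {ω | t_f - u ≤ J i ω}).toReal := ENNReal.toReal_prod _ _
    _ ≤ ∏ _i ∈ Finset.range k, K * u / w (t_f / 9) :=
        Finset.prod_le_prod (fun _ _ ↦ ENNReal.toReal_nonneg) fun i _ ↦ hJ_tail i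
    _ = (K * u / w (t_f / 9)) ^ k := by rw [Finset.prod_const, Finset.card_range]

/-- For i.i.d. jumps `J_i` with `P(J_i ≥ u) = w(max{u, t_f/9})/w(t_f/9)`, where
`w` is the truncated kernel, `P(Σ_{i<k} J_i ≥ k t_f - u) ≤ (K u / w(t_f/9))^k` for
`u ∈ (0, t_f/4]`. -/
theorem iid_jump_sum_near_maximum_bound
    {Ω : Type*} [MeasurableSpace Ω] (P : Measure Ω) [IsProbabilityMeasure P]
    (J : ℕ → Ω → ℝ) (w : ℝ → ℝ) (t_f K : ℝ)
    (ht_f : 0 < t_f) (hK : 1 ≤ K)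
    (hw_anti : ∀ s t, 0 < s → s ≤ t → w t ≤ w s)
    (hw_pos : ∀ t, 0 < t → t < t_f → 0 < w t)
    (hw_tf : w t_f = 0)
    (hw_lip : ∀ s t, t_f / 4 ≤ s → s ≤ t → t ≤ t_f →
      K⁻¹ * |t - s| ≤ |w t - w s| ∧ |w t - w s| ≤ K * |t - s|)
    (hJ_meas : ∀ i, Measurable (J i))
    (hJ_indep : iIndepFun J P)
    (hJ_dist : ∀ i : ℕ, ∀ u : ℝ, 0 < u →
      (P {ω | u ≤ J i ω}).toReal = w (max u (t_f / 9)) / w (t_f / 9)) :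
    ∀ k : ℕ, ∀ u : ℝ, 0 < u → u ≤ t_f / 4 →
      (P {ω | (k : ℝ) * t_f - u ≤ ∑ i ∈ Finset.range k, J i ω}).toReal
        ≤ (K * u / w (t_f / 9)) ^ k :=
  iid_jump_sum_near_maximum_bound_general P J w t_f K hw_pos hw_tf hw_lip hJ_indep hJ_dist
end

section
/- Let Φ : (0,∞) → (0,∞) be increasing and satisfy the weak scaling condition c₁(R/r)^{α₁} ≤ Φ(R)/Φ(r) ≤ c₂(R/r)^{α₂} for all 0 < r ≤ R, with constants c₁, c₂ > 0 and α₂ ≥ α₁ > 1. For t, l > 0 define Φ₁(t,l) = sup_{s>0} { l/s − t/Φ(s) }. Then Φ₁(t,l) is strictly positive for all t, l > 0, non-increasing in t for fixed l, and there exist constants C₁, C₂ > 0 such that C₁ t/Φ₁(t,l) ≤ Φ( l/Φ₁(t,l) ) ≤ C₂ t/Φ₁(t,l) for all t, l > 0. -/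
open MeasureTheory Real Set Filter

private lemma rpow_one_div_cancel {x e : ℝ} (hx : 0 ≤ x) (he : e ≠ 0) :
    (x ^ (1/e)) ^ e = x := by
  rw [← Real.rpow_mul hx, one_div_mul_cancel he, Real.rpow_one]

set_option maxHeartbeats 2000000 in
/-- The Legendre-type transform `Φ₁(t,l) = sup_{s>0} {l/s - t/Φ(s)}` is strictly
positive, non-increasing in `t`, and satisfies `t/Φ₁(t,l) ≍ Φ(l/Φ₁(t,l))`. -/
theorem legendre_transform_properties
    (Φ : ℝ → ℝ) (α₁ α₂ c₁ c₂ κ₁ κ₂ : ℝ)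
    (hα₁ : 1 < α₁) (hα : α₁ ≤ α₂) (hc₁ : 0 < c₁) (hc₂ : 0 < c₂)
    (hκ₁ : 0 < κ₁) (hκ₂ : 0 < κ₂)
    (hΦ_pos : ∀ r, 0 < r → 0 < Φ r)
    (hΦ_mono : ∀ r R, 0 < r → r ≤ R → Φ r ≤ Φ R)
    (hΦ_scale : ∀ r R, 0 < r → r ≤ R →
      c₁ * (R / r) ^ α₁ ≤ Φ R / Φ r ∧ Φ R / Φ r ≤ c₂ * (R / r) ^ α₂)
    (hΦ_diff : ∀ s, 0 < s → DifferentiableAt ℝ Φ s)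
    (hΦ_deriv : ∀ s, 0 < s → κ₁ * Φ s ≤ s * deriv Φ s ∧ s * deriv Φ s ≤ κ₂ * Φ s)
    (Φ₁ : ℝ → ℝ → ℝ)
    (hΦ₁ : ∀ t l, Φ₁ t l = sSup {y : ℝ | ∃ s, 0 < s ∧ y = l / s - t / Φ s}) :
    (∀ t l, 0 < t → 0 < l → 0 < Φ₁ t l) ∧
    (∀ l, 0 < l → ∀ t t', 0 < t → t ≤ t' → Φ₁ t' l ≤ Φ₁ t l) ∧
    (∃ C₁ C₂ : ℝ, 0 < C₁ ∧ 0 < C₂ ∧ ∀ t l, 0 < t → 0 < l →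
      C₁ * (t / Φ₁ t l) ≤ Φ (l / Φ₁ t l) ∧ Φ (l / Φ₁ t l) ≤ C₂ * (t / Φ₁ t l)) := by
  have hα0 : (0:ℝ) < α₁ - 1 := by linarith
  have hΦ1 : (0:ℝ) < Φ 1 := hΦ_pos 1 one_pos
  have hc₁1 : c₁ ≤ 1 := by
    have h := (hΦ_scale 1 1 one_pos le_rfl).1
    rw [div_self hΦ1.ne'] at h
    simpa using h
  -- scaling consequences
  have hupper : ∀ s μ : ℝ, 0 < s → 1 ≤ μ → Φ (μ * s) ≤ c₂ * μ ^ α₂ * Φ s := by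
    intro s μ hs hμ
    have h := (hΦ_scale s (μ * s) hs (le_mul_of_one_le_left hs.le hμ)).2
    rw [mul_div_assoc, div_self hs.ne', mul_one] at h
    rw [div_le_iff₀ (hΦ_pos s hs)] at h
    exact h
  have hlower : ∀ s μ : ℝ, 0 < s → 1 ≤ μ → c₁ * μ ^ α₁ * Φ s ≤ Φ (μ * s) := by
    intro s μ hs hμ
    have h := (hΦ_scale s (μ * s) hs (le_mul_of_one_le_left hs.le hμ)).1
    rw [mul_div_assoc, div_self hs.ne', mul_one] at h
    rw [le_div_iff₀ (hΦ_pos s hs)] at h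
    exact h
  have hsmall : ∀ s : ℝ, 0 < s → s ≤ 1 → Φ s * c₁ ≤ Φ 1 * s ^ α₁ := by
    intro s hs hs1
    have h := (hΦ_scale s 1 hs hs1).1
    rw [le_div_iff₀ (hΦ_pos s hs)] at h
    have hsx : (0:ℝ) < s ^ α₁ := Real.rpow_pos_of_pos hs _
    have hmul : (1/s) ^ α₁ * s ^ α₁ = 1 := by
      rw [← Real.mul_rpow (by positivity) hs.le, one_div_mul_cancel hs.ne', Real.one_rpow]
    calc Φ s * c₁ = (c₁ * (1/s) ^ α₁ * Φ s) * s ^ α₁ := by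
          linear_combination (-(c₁ * Φ s)) * hmul
      _ ≤ Φ 1 * s ^ α₁ := mul_le_mul_of_nonneg_right h hsx.le
  -- boundedness above
  have hbdd : ∀ t l : ℝ, 0 < t → 0 < l →
      BddAbove {y : ℝ | ∃ s, 0 < s ∧ y = l / s - t / Φ s} := by
    intro t l ht hl
    set P := t * c₁ / (l * Φ 1) with hP
    have hPpos : 0 < P := by positivity
    set s₀ := min 1 (P ^ (1 / (α₁ - 1))) with hs₀
    have hs₀pos : 0 < s₀ := lt_min one_pos (Real.rpow_pos_of_pos hPpos _)
    refine ⟨l / s₀, ?_⟩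
    rintro y ⟨s, hs, rfl⟩
    have hΦs : 0 < Φ s := hΦ_pos s hs
    rcases le_total s s₀ with hcase | hcase
    · have hs1 : s ≤ 1 := le_trans hcase (min_le_left _ _)
      have h1 : Φ s * c₁ ≤ Φ 1 * s ^ α₁ := hsmall s hs hs1
      have h2 : s ^ (α₁ - 1) ≤ P := by
        calc s ^ (α₁-1) ≤ (P ^ (1/(α₁-1))) ^ (α₁-1) :=
              Real.rpow_le_rpow hs.le (le_trans hcase (min_le_right _ _)) hα0.le
          _ = P := rpow_one_div_cancel hPpos.le hα0.ne'
      have h3 : s ^ α₁ = s ^ (α₁ - 1) * s := by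
        rw [← Real.rpow_add_one hs.ne' (α₁ - 1)]
        ring_nf
      have h5 : l * Φ 1 * s ^ (α₁ - 1) ≤ t * c₁ := by
        have h6 := mul_le_mul_of_nonneg_left h2 (by positivity : (0:ℝ) ≤ l * Φ 1)
        calc l * Φ 1 * s ^ (α₁-1) ≤ l * Φ 1 * P := h6
          _ = t * c₁ := by rw [hP]; field_simp
      have h4 : l * Φ s ≤ t * s := by
        have h1' : Φ s * c₁ ≤ Φ 1 * (s ^ (α₁-1) * s) := by rw [← h3]; exact h1
        have h4' : l * Φ s * c₁ ≤ t * s * c₁ := by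
          nlinarith [mul_le_mul_of_nonneg_left h1' hl.le,
            mul_le_mul_of_nonneg_right h5 hs.le]
        exact (mul_le_mul_iff_of_pos_right hc₁).mp h4'
      have h6 : l / s ≤ t / Φ s := by
        rw [div_le_div_iff₀ hs hΦs]; exact h4
      have h7 : (0:ℝ) ≤ l / s₀ := by positivity
      linarith
    · have h7 : l / s ≤ l / s₀ := by gcongr
      have h8 : (0:ℝ) ≤ t / Φ s := le_of_lt (div_pos ht hΦs)
      linarith
  -- positivity of Φ₁
  have hposΦ₁ : ∀ t l : ℝ, 0 < t → 0 < l → 0 < Φ₁ t l := by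
    intro t l ht hl
    set Q := 2 * t / (l * Φ 1 * c₁) with hQ
    have hQpos : 0 < Q := by positivity
    set s₁ := max 1 (Q ^ (1/(α₁-1))) with hs₁
    have hs₁1 : 1 ≤ s₁ := le_max_left _ _
    have hs₁pos : 0 < s₁ := lt_of_lt_of_le one_pos hs₁1
    have h2 : Q ≤ s₁ ^ (α₁ - 1) := by
      calc Q = (Q ^ (1/(α₁-1))) ^ (α₁-1) := (rpow_one_div_cancel hQpos.le hα0.ne').symm
        _ ≤ s₁ ^ (α₁-1) := Real.rpow_le_rpow (by positivity) (le_max_right _ _) hα0.le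
    have h3 : s₁ ^ α₁ = s₁ ^ (α₁ - 1) * s₁ := by
      rw [← Real.rpow_add_one hs₁pos.ne' (α₁ - 1)]
      ring_nf
    have hbig : c₁ * s₁ ^ α₁ * Φ 1 ≤ Φ s₁ := by
      have h := hlower 1 s₁ one_pos hs₁1
      rwa [mul_one] at h
    have hΦs₁ : 0 < Φ s₁ := hΦ_pos s₁ hs₁pos
    have h4 : 2 * t * s₁ ≤ l * Φ s₁ := by
      have h5 : 2 * t ≤ l * Φ 1 * c₁ * s₁ ^ (α₁ - 1) := by
        have h6 := mul_le_mul_of_nonneg_left h2 (by positivity : (0:ℝ) ≤ l * Φ 1 * c₁)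
        calc 2 * t = l * Φ 1 * c₁ * Q := by rw [hQ]; field_simp
          _ ≤ l * Φ 1 * c₁ * s₁ ^ (α₁-1) := h6
      nlinarith [mul_le_mul_of_nonneg_right h5 hs₁pos.le,
        mul_le_mul_of_nonneg_left hbig hl.le,
        Real.rpow_pos_of_pos hs₁pos (α₁ - 1)]
    have h7 : t / Φ s₁ ≤ l / (2 * s₁) := by
      rw [div_le_div_iff₀ hΦs₁ (by positivity)]
      nlinarith [h4]
    have h8 : 0 < l / s₁ - t / Φ s₁ := by
      have : l / (2 * s₁) < l / s₁ := by
        rw [div_lt_div_iff₀ (by positivity) hs₁pos]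
        nlinarith [hs₁pos]
      linarith
    have h9 : l / s₁ - t / Φ s₁ ≤ Φ₁ t l := by
      rw [hΦ₁]
      exact le_csSup (hbdd t l ht hl) ⟨s₁, hs₁pos, rfl⟩
    linarith
  refine ⟨hposΦ₁, ?_, ?_⟩
  · -- monotonicity in t
    intro l hl t t' ht htt'
    have ht' : 0 < t' := lt_of_lt_of_le ht htt'
    rw [hΦ₁, hΦ₁]
    refine csSup_le ⟨l / 1 - t' / Φ 1, ⟨1, one_pos, rfl⟩⟩ ?_
    rintro y ⟨s, hs, rfl⟩
    have hΦs : 0 < Φ s := hΦ_pos s hs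
    calc l / s - t' / Φ s ≤ l / s - t / Φ s := by gcongr
      _ ≤ sSup {y : ℝ | ∃ s, 0 < s ∧ y = l / s - t / Φ s} :=
        le_csSup (hbdd t l ht hl) ⟨s, hs, rfl⟩
  · -- the two-sided bound
    set lam := (2/c₁) ^ (1/(α₁-1)) with hlam
    have hlam1 : 1 ≤ lam := by
      have h2c : (1:ℝ) ≤ 2/c₁ := by rw [le_div_iff₀ hc₁]; linarith
      calc (1:ℝ) = 1 ^ (1/(α₁-1)) := (Real.one_rpow _).symm
        _ ≤ lam := Real.rpow_le_rpow zero_le_one h2c (by positivity)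
    have hlampos : 0 < lam := lt_of_lt_of_le one_pos hlam1
    have hlampow : c₁ * lam ^ (α₁ - 1) = 2 := by
      rw [hlam, rpow_one_div_cancel (by positivity) hα0.ne']
      field_simp
    have hlamα : c₁ * lam ^ α₁ = 2 * lam := by
      have h : lam ^ α₁ = lam ^ (α₁ - 1) * lam := by
        rw [← Real.rpow_add_one hlampos.ne' (α₁ - 1)]
        ring_nf
      rw [h, ← mul_assoc, hlampow]
    have h2pow : (0:ℝ) < (2:ℝ) ^ α₂ := Real.rpow_pos_of_pos two_pos _
    have h43pow : (0:ℝ) < (4/3:ℝ) ^ α₂ := Real.rpow_pos_of_pos (by norm_num) _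
    have h2lampow : (0:ℝ) < (2*lam) ^ α₂ := Real.rpow_pos_of_pos (by positivity) _
    refine ⟨1/(c₂ * (4/3:ℝ)^α₂ * (2*lam)), c₂ * (2*lam)^α₂ * (2*c₂*(2:ℝ)^α₂),
      by positivity, by positivity, ?_⟩
    intro t l ht hl
    have hA : 0 < Φ₁ t l := hposΦ₁ t l ht hl
    set A := Φ₁ t l with hAdef
    have hAs : A = sSup {y : ℝ | ∃ s, 0 < s ∧ y = l / s - t / Φ s} := hΦ₁ t l
    have hne' : Set.Nonempty {y : ℝ | ∃ s, 0 < s ∧ y = l / s - t / Φ s} :=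
      ⟨l / 1 - t / Φ 1, ⟨1, one_pos, rfl⟩⟩
    have hlt : 3/4 * A < sSup {y : ℝ | ∃ s, 0 < s ∧ y = l / s - t / Φ s} := by
      rw [← hAs]; linarith
    obtain ⟨y, hymem, hy⟩ := exists_lt_of_lt_csSup hne' hlt
    obtain ⟨s, hs, rfl⟩ := hymem
    have hΦs : 0 < Φ s := hΦ_pos s hs
    have hB0 : 0 < l / s := div_pos hl hs
    have hD0 : 0 < t / Φ s := div_pos ht hΦs
    have hsup : ∀ μ : ℝ, 0 < μ → l / (μ * s) - t / Φ (μ * s) ≤ A := by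
      intro μ hμ
      rw [hAs]
      exact le_csSup (hbdd t l ht hl) ⟨μ * s, mul_pos hμ hs, rfl⟩
    have hDB : t / Φ s ≤ l / s := by linarith
    -- Step 1 : l/s ≤ 2*lam*A
    have hstep1 : l / s ≤ 2 * lam * A := by
      have h1 := hsup lam hlampos
      have h2 : 2 * lam * Φ s ≤ Φ (lam * s) := by
        have h := hlower s lam hs hlam1
        calc 2 * lam * Φ s = c₁ * lam ^ α₁ * Φ s := by rw [hlamα]
          _ ≤ Φ (lam * s) := h
      have hΦls : 0 < Φ (lam * s) := hΦ_pos _ (mul_pos hlampos hs)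
      have h3 : t / Φ (lam * s) ≤ (t / Φ s) / (2 * lam) := by
        rw [div_le_div_iff₀ hΦls (by positivity)]
        calc t * (2*lam) = (t / Φ s) * (2 * lam * Φ s) := by field_simp
          _ ≤ (t / Φ s) * Φ (lam * s) := by gcongr
      have h4 : l / (lam * s) = (l / s) / lam := by
        rw [div_div, mul_comm lam s]
      rw [h4] at h1
      have h5 : (l / s) / lam - (t / Φ s) / (2*lam) ≤ A := by linarith
      have h6 := mul_le_mul_of_nonneg_left h5 hlampos.le
      have e1 : lam * ((l/s)/lam - (t/Φ s)/(2*lam)) = l/s - (t/Φ s)/2 := by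
        field_simp
      rw [e1] at h6
      linarith
    -- Step 2 : A < 2*c₂*2^α₂ * (t/Φ s)
    have hstep2 : A < 2 * (c₂ * (2:ℝ)^α₂) * (t / Φ s) := by
      have h1 := hsup (1/2) (by norm_num)
      have hΦh : 0 < Φ (1/2 * s) := hΦ_pos _ (by positivity)
      have h2 : Φ s ≤ c₂ * (2:ℝ)^α₂ * Φ (1/2 * s) := by
        have h := hupper (1/2 * s) 2 (by positivity) one_le_two
        have e : (2:ℝ) * (1/2 * s) = s := by ring
        rwa [e] at h
      have h3 : t / Φ (1/2 * s) ≤ c₂ * (2:ℝ)^α₂ * (t / Φ s) := by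
        have e2 : c₂ * (2:ℝ)^α₂ * (t / Φ s) = (c₂ * (2:ℝ)^α₂ * t) / Φ s := by ring
        rw [e2, div_le_div_iff₀ hΦh hΦs]
        nlinarith [mul_le_mul_of_nonneg_left h2 ht.le]
      have h4 : l / (1/2 * s) = 2 * (l / s) := by field_simp
      rw [h4] at h1
      linarith [h1, h3, hy, hD0]
    -- position of l/A
    have hr1 : 3/4 * s ≤ l / A := by
      rw [le_div_iff₀ hA]
      have h : 3/4 * A < l / s := by linarith
      rw [lt_div_iff₀ hs] at h
      linarith
    have hr2 : l / A ≤ 2 * lam * s := by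
      rw [div_le_iff₀ hA]
      have h := hstep1
      rw [div_le_iff₀ hs] at h
      linarith
    have hrpos : 0 < l / A := div_pos hl hA
    constructor
    · -- lower bound
      have h1 : Φ (3/4 * s) ≤ Φ (l/A) := hΦ_mono _ _ (by positivity) hr1
      have h2 : Φ s ≤ c₂ * (4/3:ℝ)^α₂ * Φ (3/4 * s) := by
        have h := hupper (3/4 * s) (4/3) (by positivity) (by norm_num)
        have e : (4/3:ℝ) * (3/4 * s) = s := by ring
        rwa [e] at h
      have hDle : t / Φ s ≤ 2 * lam * A := le_trans hDB hstep1
      have h3 : t / (2 * lam * A) ≤ Φ s := by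
        rw [div_le_iff₀ (by positivity)]
        have h := hDle
        rw [div_le_iff₀ hΦs] at h
        linarith
      have h4 : t / (2*lam*A) ≤ c₂ * (4/3:ℝ)^α₂ * Φ (l/A) := by
        have : c₂ * (4/3:ℝ)^α₂ * Φ (3/4*s) ≤ c₂ * (4/3:ℝ)^α₂ * Φ (l/A) := by
          gcongr
        linarith
      have e3 : (1:ℝ)/(c₂ * (4/3:ℝ)^α₂ * (2*lam)) * (t/A)
          = (t/(2*lam*A)) / (c₂ * (4/3:ℝ)^α₂) := by
        field_simp
      rw [e3, div_le_iff₀ (by positivity)]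
      linarith
    · -- upper bound
      have h1 : Φ (l/A) ≤ Φ (2*lam*s) := hΦ_mono _ _ hrpos hr2
      have h2 : Φ (2*lam*s) ≤ c₂ * (2*lam)^α₂ * Φ s := by
        have h := hupper s (2*lam) hs (by linarith)
        have e : (2*lam) * s = 2*lam*s := by ring
        rwa [e] at h
      have h3 : Φ s ≤ 2*c₂*(2:ℝ)^α₂ * (t/A) := by
        have e : 2*c₂*(2:ℝ)^α₂ * (t/A) = (2*c₂*(2:ℝ)^α₂*t)/A := by ring
        rw [e, le_div_iff₀ hA]
        have h := hstep2
        have e2 : 2*(c₂*(2:ℝ)^α₂)*(t/Φ s) = (2*(c₂*(2:ℝ)^α₂)*t)/Φ s := by ring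
        rw [e2, lt_div_iff₀ hΦs] at h
        linarith
      calc Φ (l/A) ≤ c₂ * (2*lam)^α₂ * Φ s := le_trans h1 h2
        _ ≤ c₂ * (2*lam)^α₂ * (2*c₂*(2:ℝ)^α₂ * (t/A)) := by gcongr
        _ = c₂ * (2*lam)^α₂ * (2*c₂*(2:ℝ)^α₂) * (t/A) := by ring
end

section
/- Let Φ be a strictly increasing function on (0,∞) satisfying the weak scaling condition with exponents α₂ ≥ α₁ > 1, and let M(t,l) be a positive function satisfying t/M(t,l) ≍ Φ(l/M(t,l)) for all t,l > 0. Then (i) M(Φ(l), l) ≍ 1 for all l > 0, and (ii) there exist constants c₃, c₄ > 0 such that c₃ (T/t)^{−1/(α₁−1)} ≤ M(T,l)/M(t,l) ≤ c₄ (T/t)^{−1/(α₂−1)} for all l > 0 and 0 < t ≤ T. -/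
open MeasureTheory Real Set Filter

private lemma key1 {v c D α : ℝ} (hv : 0 < v) (hc : 0 < c) (hD : 0 < D) (hα : 1 < α)
    (h : c * v ^ α ≤ D * v) : v ≤ (D / c) ^ (1 / (α - 1)) := by
  have hp : (0:ℝ) < α - 1 := by linarith
  have h1 : v ^ (α - 1) ≤ D / c := by
    rw [Real.rpow_sub hv, Real.rpow_one, div_le_div_iff₀ hv hc]
    linarith [h]
  have h2 : (v ^ (α - 1)) ^ (1 / (α - 1)) ≤ (D / c) ^ (1 / (α - 1)) :=
    Real.rpow_le_rpow (Real.rpow_pos_of_pos hv _).le h1 (by positivity)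
  rwa [← Real.rpow_mul hv.le, mul_one_div, div_self hp.ne', Real.rpow_one] at h2

private lemma key2 {v c D α : ℝ} (hv : 0 < v) (hc : 0 < c) (hD : 0 < D) (hα : 1 < α)
    (h : D * v ≤ c * v ^ α) : (D / c) ^ (1 / (α - 1)) ≤ v := by
  have hp : (0:ℝ) < α - 1 := by linarith
  have h1 : D / c ≤ v ^ (α - 1) := by
    rw [Real.rpow_sub hv, Real.rpow_one, div_le_div_iff₀ hc hv]
    linarith [h]
  have h2 : (D / c) ^ (1 / (α - 1)) ≤ (v ^ (α - 1)) ^ (1 / (α - 1)) :=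
    Real.rpow_le_rpow (by positivity) h1 (by positivity)
  rwa [← Real.rpow_mul hv.le, mul_one_div, div_self hp.ne', Real.rpow_one] at h2

private lemma neg_exp {t T : ℝ} (ht : 0 < t) (hT : 0 < T) (q : ℝ) :
    (t / T) ^ q = (T / t) ^ (-q) := by
  rw [← inv_div T t, Real.inv_rpow (by positivity), ← Real.rpow_neg (by positivity)]

/-- If `t/M(t,l) ≍ Φ(l/M(t,l))` for a strictly increasing weakly scaling `Φ`
with lower index `α₁ > 1`, then `M(Φ(l), l) ≍ 1` and `M(T,l)/M(t,l)` obeys two-sided power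
bounds in `T/t`. -/
theorem M_scaling_properties
    (Φ : ℝ → ℝ) (M : ℝ → ℝ → ℝ) (α₁ α₂ c₁ c₂ m₁ m₂ : ℝ)
    (hα₁ : 1 < α₁) (hα : α₁ ≤ α₂) (hc₁ : 0 < c₁) (hc₂ : 0 < c₂)
    (hm₁ : 0 < m₁) (hm₂ : 0 < m₂)
    (hΦ_pos : ∀ r, 0 < r → 0 < Φ r)
    (hΦ_mono : StrictMonoOn Φ (Ioi 0))
    (hΦ_scale : ∀ r R, 0 < r → r ≤ R →
      c₁ * (R / r) ^ α₁ ≤ Φ R / Φ r ∧ Φ R / Φ r ≤ c₂ * (R / r) ^ α₂)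
    (hM_pos : ∀ t l, 0 < t → 0 < l → 0 < M t l)
    (hM_rel : ∀ t l, 0 < t → 0 < l →
      m₁ * (t / M t l) ≤ Φ (l / M t l) ∧ Φ (l / M t l) ≤ m₂ * (t / M t l)) :
    (∃ k₁ k₂ : ℝ, 0 < k₁ ∧ 0 < k₂ ∧ ∀ l, 0 < l →
      k₁ ≤ M (Φ l) l ∧ M (Φ l) l ≤ k₂) ∧
    (∃ c₃ c₄ : ℝ, 0 < c₃ ∧ 0 < c₄ ∧ ∀ l, 0 < l → ∀ t T : ℝ, 0 < t → t ≤ T →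
      c₃ * (T / t) ^ (-(1 / (α₁ - 1))) ≤ M T l / M t l ∧
      M T l / M t l ≤ c₄ * (T / t) ^ (-(1 / (α₂ - 1)))) := by
  have hα₂ : 1 < α₂ := lt_of_lt_of_le hα₁ hα
  constructor
  · -- Part (i)
    refine ⟨min 1 ((c₁ / m₂) ^ (1 / (α₁ - 1))),
            max 1 ((1 / m₁ / c₁) ^ (1 / (α₁ - 1))), ?_, ?_, ?_⟩
    · exact lt_min one_pos (Real.rpow_pos_of_pos (by positivity) _)
    · exact lt_of_lt_of_le one_pos (le_max_left _ _)
    intro l hl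
    have hΦl : 0 < Φ l := hΦ_pos l hl
    have hx : 0 < M (Φ l) l := hM_pos (Φ l) l hΦl hl
    obtain ⟨hrl, hru⟩ := hM_rel (Φ l) l hΦl hl
    set x := M (Φ l) l with hxdef
    constructor
    · -- lower bound
      rcases le_or_gt 1 x with h1 | h1
      · exact le_trans (min_le_left _ _) h1
      · have hlx : 0 < l / x := by positivity
        have hll : l ≤ l / x := by
          rw [le_div_iff₀ hx]; nlinarith
        have hscale := (hΦ_scale l (l / x) hl hll).1
        have hrr : (l / x) / l = 1 / x := by
          field_simp
        rw [hrr] at hscale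
        have hub : Φ (l / x) / Φ l ≤ m₂ * (1 / x) := by
          rw [div_le_iff₀ hΦl]
          calc Φ (l / x) ≤ m₂ * (Φ l / x) := hru
            _ = m₂ * (1 / x) * Φ l := by ring
        have hkey := key1 (v := 1 / x) (by positivity) hc₁ hm₂ hα₁ (le_trans hscale hub)
        have hinv := inv_anti₀ (by positivity : (0:ℝ) < 1 / x) hkey
        rw [one_div x, inv_inv] at hinv
        calc min 1 ((c₁ / m₂) ^ (1 / (α₁ - 1)))
            ≤ (c₁ / m₂) ^ (1 / (α₁ - 1)) := min_le_right _ _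
          _ = ((m₂ / c₁) ^ (1 / (α₁ - 1)))⁻¹ := by
              rw [← Real.inv_rpow (by positivity), inv_div]
          _ ≤ x := hinv
    · -- upper bound
      rcases le_or_gt x 1 with h1 | h1
      · exact le_trans h1 (le_max_left _ _)
      · have hlx : 0 < l / x := by positivity
        have hll : l / x ≤ l := div_le_self hl.le h1.le
        have hΦlx : 0 < Φ (l / x) := hΦ_pos _ hlx
        have hscale := (hΦ_scale (l / x) l hlx hll).1
        have hrr : l / (l / x) = x := by
          field_simp
        rw [hrr] at hscale
        have hub : Φ l / Φ (l / x) ≤ 1 / m₁ * x := by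
          rw [div_le_iff₀ hΦlx]
          calc Φ l = 1 / m₁ * x * (m₁ * (Φ l / x)) := by field_simp
            _ ≤ 1 / m₁ * x * Φ (l / x) :=
                mul_le_mul_of_nonneg_left hrl (by positivity)
        have hkey := key1 hx hc₁ (by positivity) hα₁ (le_trans hscale hub)
        exact le_trans hkey (le_max_right _ _)
  · -- Part (ii)
    refine ⟨min 1 ((c₁ * m₁ / m₂) ^ (1 / (α₁ - 1))),
            max ((c₂ * m₂ / m₁) ^ (1 / (α₂ - 1))) ((m₂ / m₁ / c₁) ^ (1 / (α₁ - 1))),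
            ?_, ?_, ?_⟩
    · exact lt_min one_pos (Real.rpow_pos_of_pos (by positivity) _)
    · exact lt_of_lt_of_le (Real.rpow_pos_of_pos (by positivity) _) (le_max_left _ _)
    intro l hl t T ht htT
    have hT : 0 < T := lt_of_lt_of_le ht htT
    have ha : 0 < M t l := hM_pos t l ht hl
    have hA : 0 < M T l := hM_pos T l hT hl
    obtain ⟨hPl, hPu⟩ := hM_rel t l ht hl
    obtain ⟨hQl, hQu⟩ := hM_rel T l hT hl
    set a := M t l with hadef
    set A := M T l with hAdef
    have hq : 1 / (α₂ - 1) ≤ 1 / (α₁ - 1) :=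
      one_div_le_one_div_of_le (by linarith) (by linarith)
    have hTt1 : 1 ≤ T / t := (one_le_div ht).mpr htT
    have htT1 : t / T ≤ 1 := (div_le_one hT).mpr htT
    have hTtpos : 0 < T / t := div_pos hT ht
    have htTpos : 0 < t / T := div_pos ht hT
    rcases le_total A a with hAa | haA
    · -- A ≤ a
      have hll : l / a ≤ l / A :=
        div_le_div_of_nonneg_left hl.le hA hAa
      have hlA : 0 < l / A := by positivity
      have hla : 0 < l / a := by positivity
      have hv : 0 < a / A := div_pos ha hA
      obtain ⟨hs1, hs2⟩ := hΦ_scale (l / a) (l / A) hla hll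
      have hrr : (l / A) / (l / a) = a / A := by
        rw [div_div_div_comm, div_self hl.ne', one_div_div]
      rw [hrr] at hs1 hs2
      have hPpos : 0 < Φ (l / a) := hΦ_pos _ hla
      have hQpos : 0 < Φ (l / A) := hΦ_pos _ hlA
      have hQP_ub : Φ (l / A) / Φ (l / a) ≤ ((m₂ / m₁) * (T / t)) * (a / A) := by
        have h1 : Φ (l / A) / Φ (l / a) ≤ (m₂ * (T / A)) / (m₁ * (t / a)) :=
          div_le_div₀ (by positivity) hQu (by positivity) hPl
        have h2 : (m₂ * (T / A)) / (m₁ * (t / a)) = ((m₂ / m₁) * (T / t)) * (a / A) := by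
          field_simp
        rwa [h2] at h1
      have hQP_lb : ((m₁ / m₂) * (T / t)) * (a / A) ≤ Φ (l / A) / Φ (l / a) := by
        have h1 : (m₁ * (T / A)) / (m₂ * (t / a)) ≤ Φ (l / A) / Φ (l / a) :=
          div_le_div₀ hQpos.le hQl hPpos hPu
        have h2 : (m₁ * (T / A)) / (m₂ * (t / a)) = ((m₁ / m₂) * (T / t)) * (a / A) := by
          field_simp
        rwa [h2] at h1
      constructor
      · -- lower bound
        have hkey := key1 hv hc₁ (by positivity) hα₁ (le_trans hs1 hQP_ub)
        have hD : (0:ℝ) < ((m₂ / m₁) * (T / t)) / c₁ := by positivity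
        have hinv := inv_anti₀ hv hkey
        rw [inv_div] at hinv
        calc min 1 ((c₁ * m₁ / m₂) ^ (1 / (α₁ - 1))) * (T / t) ^ (-(1 / (α₁ - 1)))
            ≤ (c₁ * m₁ / m₂) ^ (1 / (α₁ - 1)) * (T / t) ^ (-(1 / (α₁ - 1))) :=
              mul_le_mul_of_nonneg_right (min_le_right _ _) (by positivity)
          _ = ((((m₂ / m₁) * (T / t)) / c₁)⁻¹) ^ (1 / (α₁ - 1)) := by
              rw [show (((m₂ / m₁) * (T / t)) / c₁)⁻¹ = (c₁ * m₁ / m₂) * (t / T) by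
                    field_simp,
                  Real.mul_rpow (by positivity) (by positivity), neg_exp ht hT]
          _ = ((((m₂ / m₁) * (T / t)) / c₁) ^ (1 / (α₁ - 1)))⁻¹ := by
              rw [← Real.inv_rpow hD.le]
          _ ≤ A / a := hinv
      · -- upper bound
        have hkey := key2 hv hc₂ (by positivity) hα₂ (le_trans hQP_lb hs2)
        have hD : (0:ℝ) < ((m₁ / m₂) * (T / t)) / c₂ := by positivity
        have hinv := inv_anti₀ (Real.rpow_pos_of_pos hD _) hkey
        rw [inv_div] at hinv
        calc A / a ≤ ((((m₁ / m₂) * (T / t)) / c₂) ^ (1 / (α₂ - 1)))⁻¹ := hinv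
          _ = ((((m₁ / m₂) * (T / t)) / c₂)⁻¹) ^ (1 / (α₂ - 1)) := by
              rw [← Real.inv_rpow hD.le]
          _ = (c₂ * m₂ / m₁) ^ (1 / (α₂ - 1)) * (T / t) ^ (-(1 / (α₂ - 1))) := by
              rw [show (((m₁ / m₂) * (T / t)) / c₂)⁻¹ = (c₂ * m₂ / m₁) * (t / T) by
                    field_simp,
                  Real.mul_rpow (by positivity) (by positivity), neg_exp ht hT]
          _ ≤ max ((c₂ * m₂ / m₁) ^ (1 / (α₂ - 1))) ((m₂ / m₁ / c₁) ^ (1 / (α₁ - 1))) *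
                (T / t) ^ (-(1 / (α₂ - 1))) :=
              mul_le_mul_of_nonneg_right (le_max_left _ _) (by positivity)
    · -- a ≤ A
      have hll : l / A ≤ l / a :=
        div_le_div_of_nonneg_left hl.le ha haA
      have hlA : 0 < l / A := by positivity
      have hla : 0 < l / a := by positivity
      have hw : 0 < A / a := div_pos hA ha
      obtain ⟨hs1, hs2⟩ := hΦ_scale (l / A) (l / a) hlA hll
      have hrr : (l / a) / (l / A) = A / a := by
        rw [div_div_div_comm, div_self hl.ne', one_div_div]
      rw [hrr] at hs1 hs2
      have hPpos : 0 < Φ (l / a) := hΦ_pos _ hla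
      have hQpos : 0 < Φ (l / A) := hΦ_pos _ hlA
      have hPQ_ub : Φ (l / a) / Φ (l / A) ≤ ((m₂ / m₁) * (t / T)) * (A / a) := by
        have h1 : Φ (l / a) / Φ (l / A) ≤ (m₂ * (t / a)) / (m₁ * (T / A)) :=
          div_le_div₀ (by positivity) hPu (by positivity) hQl
        have h2 : (m₂ * (t / a)) / (m₁ * (T / A)) = ((m₂ / m₁) * (t / T)) * (A / a) := by
          field_simp
        rwa [h2] at h1
      have hkey := key1 hw hc₁ (by positivity) hα₁ (le_trans hs1 hPQ_ub)
      constructor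
      · -- lower bound, trivial since 1 ≤ A / a
        have h1Aa : 1 ≤ A / a := (one_le_div ha).mpr haA
        calc min 1 ((c₁ * m₁ / m₂) ^ (1 / (α₁ - 1))) * (T / t) ^ (-(1 / (α₁ - 1)))
            ≤ 1 * 1 :=
              mul_le_mul (min_le_left _ _)
                (Real.rpow_le_one_of_one_le_of_nonpos hTt1 (neg_nonpos.mpr (one_div_nonneg.mpr (by linarith)))) (by positivity)
                zero_le_one
          _ = 1 := mul_one 1
          _ ≤ A / a := h1Aa
      · -- upper bound
        calc A / a ≤ (((m₂ / m₁) * (t / T)) / c₁) ^ (1 / (α₁ - 1)) := hkey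
          _ = (m₂ / m₁ / c₁) ^ (1 / (α₁ - 1)) * (t / T) ^ (1 / (α₁ - 1)) := by
              rw [show ((m₂ / m₁) * (t / T)) / c₁ = (m₂ / m₁ / c₁) * (t / T) by ring,
                  Real.mul_rpow (by positivity) (by positivity)]
          _ ≤ (m₂ / m₁ / c₁) ^ (1 / (α₁ - 1)) * (t / T) ^ (1 / (α₂ - 1)) :=
              mul_le_mul_of_nonneg_left
                (Real.rpow_le_rpow_of_exponent_ge htTpos htT1 hq) (by positivity)
          _ = (m₂ / m₁ / c₁) ^ (1 / (α₁ - 1)) * (T / t) ^ (-(1 / (α₂ - 1))) := by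
              rw [neg_exp ht hT]
          _ ≤ max ((c₂ * m₂ / m₁) ^ (1 / (α₂ - 1))) ((m₂ / m₁ / c₁) ^ (1 / (α₁ - 1))) *
                (T / t) ^ (-(1 / (α₂ - 1))) :=
              mul_le_mul_of_nonneg_right (le_max_right _ _) (by positivity)
end
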